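/- arXiv:2106.07249 — 3 statements merged into one kernel-verified Lean document; each statement's English description precedes it below -/
import Mathlib

section
/- Let C be a finite alphabet with |C| = m. If X ⊆ C^ℕ is ω-regular, then the winning shift W(X), viewed as a subset of {0, 1, …, m − 1}^ℕ, is ω-regular. -/
open scoped BigOperators

/-- A language is regular if it is accepted by a DFA with finitely many states. -/
def IsRegularLang {α : Type*} (L : Set (List α)) : Prop :=
  ∃ (σ : Type) (_ : Fintype σ) (M : DFA α σ), ∀ w : List α, w ∈ M.accepts ↔ w ∈ L

/-- Pad a word over `A` to length `M` by prepending the padding symbol `none`. -/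
def padOne {A : Type*} (M : ℕ) (w : List A) : List (Option A) :=
  List.replicate (M - w.length) none ++ w.map some

/-- The padded form of a `d`-tuple of words over `A`, as a word over `(A ∪ {#})^d`. -/
def padTuple {A : Type*} {d : ℕ} (ws : Fin d → List A) : List (Fin d → Option A) :=
  List.ofFn fun j : Fin (Finset.univ.sup fun i : Fin d => (ws i).length) =>
    fun i : Fin d =>
      (padOne (Finset.univ.sup fun i : Fin d => (ws i).length) (ws i)).getD j.val none

/-- An abstract numeration system over the alphabet `A`, encoded by the order isomorphism
`rep : ℕ → L ⊆ A*` enumerating its (infinite) language in increasing order. -/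
structure ANS (A : Type*) where
  rep : ℕ → List A
  inj : Function.Injective rep

/-- A set `Y ⊆ ℕ^d` is `S`-recognizable if the padded representations of its members form
a regular language. -/
def ANS.Recognizable {A : Type*} (S : ANS A) {d : ℕ} (Y : Set (Fin d → ℕ)) : Prop :=
  IsRegularLang { w : List (Fin d → Option A) | ∃ t ∈ Y, w = padTuple fun i => S.rep (t i) }

/-- An ANS is addable if the graph of addition is `S`-recognizable. -/
def ANS.Addable {A : Type*} (S : ANS A) : Prop :=
  S.Recognizable { t : Fin 3 → ℕ | t 0 + t 1 = t 2 }

/-- An ANS is comparable if the relation `≤` is `S`-recognizable. -/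
def ANS.Comparable {A : Type*} (S : ANS A) : Prop :=
  S.Recognizable { t : Fin 2 → ℕ | t 0 ≤ t 1 }

/-- An ANS is regular if `ℕ` (i.e. its language) is `S`-recognizable. -/
def ANS.IsRegularANS {A : Type*} (S : ANS A) : Prop :=
  S.Recognizable (Set.univ : Set (Fin 1 → ℕ))

/-- The unary ANS, with language `0*` ordered by length. -/
def unaryANS : ANS Unit where
  rep := fun n => List.replicate n ()
  inj := fun m n h => by simpa using congrArg List.length h

/-- `x` is `S`-automatic: some DFAO outputs `x n` on input `rep_S n`. -/
def SAutomatic {A C : Type*} (S : ANS A) (x : ℕ → C) : Prop :=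
  ∃ (Q : Type) (_ : Fintype Q) (M : DFA A Q) (τ : Q → C),
    ∀ n : ℕ, τ (M.eval (S.rep n)) = x n

/-- The shift map on one-sided infinite words. -/
def shiftMap {C : Type*} (x : ℕ → C) : ℕ → C := fun n => x (n + 1)

/-- The orbit closure of `x` (closure in the product topology over the discrete alphabet):
`y` belongs to it iff every finite prefix of `y` occurs in `x`. -/
def orbitClosure {C : Type*} (x : ℕ → C) : Set (ℕ → C) :=
  { y | ∀ n : ℕ, ∃ m : ℕ, ∀ i < n, y i = x (m + i) }

/-- A subshift: a shift-invariant subset of `C^ℕ` that is closed in the product topology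
over the discrete alphabet (expressed combinatorially). -/
def IsSubshift {C : Type*} (X : Set (ℕ → C)) : Prop :=
  (∀ x ∈ X, shiftMap x ∈ X) ∧
  ∀ y : ℕ → C, (∀ n : ℕ, ∃ x ∈ X, ∀ i < n, y i = x i) → y ∈ X

/-- The language of a set of infinite words: all finite factors of its elements. -/
def LangOf {C : Type*} (X : Set (ℕ → C)) : Set (List C) :=
  { w | ∃ x ∈ X, ∃ p : ℕ, w = List.ofFn fun i : Fin w.length => x (p + i) }

/-- A word is right special in (the language of) `X` if it has two distinct one-letter
extensions in the language of `X`. -/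
def RightSpecial {C : Type*} (X : Set (ℕ → C)) (w : List C) : Prop :=
  ∃ a b : C, a ≠ b ∧ w ++ [a] ∈ LangOf X ∧ w ++ [b] ∈ LangOf X

/-- The factor complexity of `x`: the number of distinct factors of length `n`. -/
noncomputable def factorComplexity {C : Type*} (x : ℕ → C) (n : ℕ) : ℕ :=
  Set.ncard { w : List C | ∃ p : ℕ, w = List.ofFn fun i : Fin n => x (p + i) }

/-- `T` is a strategy tree witnessing `α ∈ W(X)`: a prefix-closed set of finite words
containing the empty word, in which every word of length `i` has exactly `α i + 1`
one-letter extensions, and all whose infinite branches lie in `X`. -/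
def IsStrategyTree {C : Type*} (X : Set (ℕ → C)) (α : ℕ → ℕ) (T : Set (List C)) : Prop :=
  ([] : List C) ∈ T ∧
  (∀ u v : List C, u ++ v ∈ T → u ∈ T) ∧
  (∀ w ∈ T, Set.ncard { c : C | w ++ [c] ∈ T } = α w.length + 1) ∧
  (∀ y : ℕ → C, (∀ n : ℕ, (List.ofFn fun i : Fin n => y i) ∈ T) → y ∈ X)

/-- The winning shift of `X ⊆ C^ℕ`, a subset of `ℕ^ℕ`. -/
def winningShift {C : Type*} (X : Set (ℕ → C)) : Set (ℕ → ℕ) :=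
  { α | ∃ T : Set (List C), IsStrategyTree X α T }

/-- Membership in the winning set of a set `X` of finite words, defined recursively:
`ε ∈ W(X)` iff `ε ∈ X`, and `a :: α ∈ W(X)` iff there is a set of `a + 1` letters `c`
such that `α` is in the winning set of the left quotient of `X` by `c`. -/
def winningSetMem {C : Type*} : List ℕ → Set (List C) → Prop
  | [], X => [] ∈ X
  | a :: α, X => ∃ S : Finset C, S.card = a + 1 ∧ ∀ c ∈ S, winningSetMem α { w | c :: w ∈ X }

/-- `Σ y = m`: the sum of the letters of `y ∈ ℕ^ℕ` is finite and equals `m`. -/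
def sumEq (y : ℕ → ℕ) (m : ℕ) : Prop :=
  (Function.support y).Finite ∧ ∑ᶠ i, y i = m

/-- `Y ⊆ ℕ^ℕ` has finite coding dimension: the sums `Σ y`, `y ∈ Y`, are uniformly bounded. -/
def FiniteCodingDim (Y : Set (ℕ → ℕ)) : Prop :=
  ∃ d : ℕ, ∀ y ∈ Y, ∀ F : Finset ℕ, ∑ i ∈ F, y i ≤ d

/-- The set `{ν(y) : y ∈ Y, Σy = k} ⊆ ℕᵏ`: nondecreasing `k`-tuples `t` such that the word
whose letter at `j` is the number of occurrences of `j` in `t` belongs to `Y`. -/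
def nuSet (Y : Set (ℕ → ℕ)) (k : ℕ) : Set (Fin k → ℕ) :=
  { t | Monotone t ∧ (fun j => Set.ncard { i : Fin k | t i = j }) ∈ Y }

/-- `Y ⊆ ℕ^ℕ` is weakly `S`-codable if `{ν(y) : y ∈ Y, Σy = k}` is `S`-recognizable for
every `k`. -/
def WeaklySCodable {A : Type*} (S : ANS A) (Y : Set (ℕ → ℕ)) : Prop :=
  ∀ k : ℕ, S.Recognizable (nuSet Y k)

/-- `Y ⊆ ℕ^ℕ` is `S`-codable if it is weakly `S`-codable and has finite coding dimension. -/
def SCodable {A : Type*} (S : ANS A) (Y : Set (ℕ → ℕ)) : Prop :=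
  WeaklySCodable S Y ∧ FiniteCodingDim Y

/-- `P_{111}(Y)`: strictly increasing triples `(a, b, c)` such that the word with letter `1`
exactly at positions `a`, `b`, `c` and `0` elsewhere belongs to `Y`. -/
def P111 (Y : Set (ℕ → ℕ)) : Set (Fin 3 → ℕ) :=
  { t | t 0 < t 1 ∧ t 1 < t 2 ∧
        (fun j => if j = t 0 ∨ j = t 1 ∨ j = t 2 then 1 else 0) ∈ Y }

/-- `P_v(Y)` for a finite word `v` over `ℕ`: strictly increasing tuples `n` such that the
word with letter `v i` at position `n i` and `0` elsewhere belongs to `Y`. -/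
def PvSet (v : List ℕ) (Y : Set (ℕ → ℕ)) : Set (Fin v.length → ℕ) :=
  { n | StrictMono n ∧
        (fun j => ∑ i : Fin v.length, if n i = j then v.get i else 0) ∈ Y }

/-- `X` is sofic: the set of label sequences of right-infinite paths in a finite
edge-labeled graph. -/
def IsSofic {C : Type*} (X : Set (ℕ → C)) : Prop :=
  ∃ (V : Type) (_ : Fintype V) (E : Set (V × C × V)),
    X = { x | ∃ p : ℕ → V, ∀ n : ℕ, (p n, x n, p (n + 1)) ∈ E }

/-- The factor `x[a..b-1]` of an infinite word. -/
def segmentOf {C : Type*} (x : ℕ → C) (a b : ℕ) : List C :=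
  List.ofFn fun i : Fin (b - a) => x (a + i)

/-- `U · V^ω`: infinite words that decompose as a word of `U` followed by infinitely many
nonempty words of `V`. -/
def omegaIter {C : Type*} (U V : Set (List C)) : Set (ℕ → C) :=
  { x | ∃ k : ℕ → ℕ, StrictMono k ∧ segmentOf x 0 (k 0) ∈ U ∧
        ∀ i : ℕ, segmentOf x (k i) (k (i + 1)) ∈ V }

/-- `X ⊆ C^ℕ` is ω-regular: a finite union of sets `U · V^ω` with `U`, `V` regular. -/
def IsOmegaRegular {C : Type*} (X : Set (ℕ → C)) : Prop :=
  ∃ (n : ℕ) (U V : Fin n → Set (List C)),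
    (∀ i, IsRegularLang (U i) ∧ IsRegularLang (V i)) ∧
    X = ⋃ i, omegaIter (U i) (V i)

/-- The words `p₁ = a`, `p_{k+1} = p_k bᵏ p_k` (with `a = false`, `b = true`). -/
def pWord : ℕ → List Bool
  | 0 => []
  | 1 => [false]
  | (k + 2) => pWord (k + 1) ++ List.replicate (k + 1) true ++ pWord (k + 1)

/-- Combinatorial continuity of `φ` on `Y` for product topologies over discrete alphabets:
every finite prefix of `φ y` is determined by a finite prefix of `y`. -/
def ContOn {B C : Type*} (φ : (ℕ → B) → (ℕ → C)) (Y : Set (ℕ → B)) : Prop :=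
  ∀ y ∈ Y, ∀ n : ℕ, ∃ m : ℕ, ∀ y' ∈ Y, (∀ i < m, y' i = y i) → ∀ i < n, φ y' i = φ y i

/-!
Call `μ : C → M` into a finite monoid *saturating* for `X` if membership of an infinite word in
`X` only depends on the `μ`-values of the blocks of any of its factorizations. An ω-regular set
is saturated by the transition monoid of a Büchi automaton recognizing it, provided the
transitions also record whether an accepting state was visited.

The game attached to a branching word `b` can then be summarized by its profile: the family of
targets `A ⊆ M` into which the player keeping `b i + 1` letters at move `i` can force the value
of the play. Profiles form a finite monoid and `b ↦ profile b` is a morphism, so its fibres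
`L t` are regular. By Ramsey's theorem every `β` lies in some `L t · (L f)^ω`. Conversely, if
`β` and `β'` both lie in `L t · (L f)^ω` and `β` is winning, a strategy for `β'` is built block
by block: in each block it forces the value of its play into the values reachable by the
strategy for `β` in the corresponding block, which yields a shadow branch for `β` with the same
block values; saturation puts the play for `β'` in `X`. Hence `W(X)` is the finite union of the
sets `L t · (L f)^ω` that meet it.
-/

section Segments

variable {C : Type*} (x : ℕ → C)

theorem segmentOf_length (a b : ℕ) : (segmentOf x a b).length = b - a := by
  simp [segmentOf]

theorem segmentOf_self (a : ℕ) : segmentOf x a a = [] := by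
  simp [segmentOf]

theorem segmentOf_getElem {a b i : ℕ} (h : i < (segmentOf x a b).length) :
    (segmentOf x a b)[i] = x (a + i) := by
  simp [segmentOf]

theorem segmentOf_append {a b c : ℕ} (hab : a ≤ b) (hbc : b ≤ c) :
    segmentOf x a c = segmentOf x a b ++ segmentOf x b c := by
  refine List.ext_getElem (by simp [segmentOf_length]; omega) fun i h₁ h₂ => ?_
  rw [List.getElem_append, segmentOf_getElem]
  split_ifs with hi
  · rw [segmentOf_getElem]
  · rw [segmentOf_getElem]
    simp only [segmentOf_length] at hi ⊢
    congr 1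
    omega

theorem segmentOf_snoc {a b : ℕ} (hab : a ≤ b) :
    segmentOf x a (b + 1) = segmentOf x a b ++ [x b] := by
  rw [segmentOf_append x hab b.le_succ]
  simp [segmentOf]

theorem segmentOf_cons {a b : ℕ} (hab : a < b) :
    segmentOf x a b = x a :: segmentOf x (a + 1) b := by
  rw [segmentOf_append x a.le_succ hab]
  simp [segmentOf]

theorem segmentOf_take {a b : ℕ} (i : ℕ) (h : a + i ≤ b) :
    (segmentOf x a b).take i = segmentOf x a (a + i) := by
  refine List.ext_getElem (by simp [segmentOf_length]; omega) fun j h₁ h₂ => ?_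
  rw [List.getElem_take, segmentOf_getElem, segmentOf_getElem]

theorem segmentOf_drop {a b : ℕ} (i : ℕ) (h : a + i ≤ b) :
    (segmentOf x a b).drop i = segmentOf x (a + i) b := by
  rw [segmentOf_append x (Nat.le_add_right a i) h, List.drop_left' (by simp [segmentOf_length])]

theorem segmentOf_comp {D : Type*} (f : C → D) (a b : ℕ) :
    segmentOf (f ∘ x) a b = (segmentOf x a b).map f := by
  simp [segmentOf, List.map_ofFn]
  rfl

theorem ofFn_eq_segmentOf (n : ℕ) : (List.ofFn fun i : Fin n => x i) = segmentOf x 0 n := by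
  simp [segmentOf]

theorem exists_segmentOf_eq_of_isPrefix {A : ℕ → List C} {l : ℕ → ℕ}
    (hl : StrictMono l) (hlen : ∀ j, (A j).length = l j) (hA : ∀ j, A j <+: A (j + 1)) :
    ∃ y : ℕ → C, ∀ j, segmentOf y 0 (l j) = A j := by
  have hpre : ∀ i j, i ≤ j → A i <+: A j := fun i j hij => by
    induction j, hij using Nat.le_induction with
    | base => exact List.prefix_refl _
    | succ j _ ih => exact ih.trans (hA j)
  have hlt : ∀ n, n < (A (n + 1)).length := fun n => hlen (n + 1) ▸ hl.le_apply
  refine ⟨fun n => (A (n + 1))[n]'(hlt n), fun j =>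
    List.ext_getElem (by rw [segmentOf_length, hlen, Nat.sub_zero]) fun i h₁ h₂ => ?_⟩
  rw [segmentOf_getElem, Nat.zero_add]
  rcases le_total (i + 1) j with h | h
  · exact (hpre _ _ h).getElem _
  · exact ((hpre _ _ h).getElem h₂).symm

end Segments

section Blocks

open Classical in
/-- The index `j` of the block `[l j, l (j + 1))` containing `n`. -/
noncomputable def blockIdx (l : ℕ → ℕ) (n : ℕ) : ℕ := Nat.findGreatest (fun j => l j ≤ n) n

variable {l : ℕ → ℕ} (hl : StrictMono l)
include hl

theorem blockIdx_eq {n j : ℕ} (h₁ : l j ≤ n) (h₂ : n < l (j + 1)) : blockIdx l n = j := by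
  classical
  refine le_antisymm ?_ (Nat.le_findGreatest (hl.le_apply.trans h₁) h₁)
  by_contra! hj
  have := Nat.findGreatest_spec (P := fun j => l j ≤ n) (hl.le_apply.trans h₁) h₁
  have := hl.monotone (show j + 1 ≤ _ from hj)
  unfold blockIdx at *
  omega

theorem blockIdx_spec {n : ℕ} (hn : l 0 ≤ n) :
    l (blockIdx l n) ≤ n ∧ n < l (blockIdx l n + 1) := by
  classical
  refine ⟨Nat.findGreatest_spec (P := fun j => l j ≤ n) n.zero_le hn, ?_⟩
  by_contra! h
  exact Nat.findGreatest_is_greatest (Nat.lt_succ_self _) (hl.le_apply.trans h) h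

theorem blockIdx_glue {σ : Type*} {g : ℕ → ℕ → σ}
    (hg : ∀ j, g (j + 1) (l (j + 1)) = g j (l (j + 1)))
    {j n : ℕ} (h₁ : l j ≤ n) (h₂ : n ≤ l (j + 1)) : g (blockIdx l n) n = g j n := by
  rcases h₂.lt_or_eq with h₂ | rfl
  · rw [blockIdx_eq hl h₁ h₂]
  · rw [blockIdx_eq hl le_rfl (hl (j + 1).lt_succ_self), hg]

end Blocks

section Ramsey

theorem Set.Infinite.exists_infinite_fiber {κ : Type*} [Finite κ] {s : Set ℕ} (hs : s.Infinite)
    (f : ℕ → κ) : ∃ k, {n | n ∈ s ∧ f n = k}.Infinite := by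
  by_contra! h
  exact hs ((Set.finite_iUnion h).subset fun n hn => Set.mem_iUnion.2 ⟨f n, hn, rfl⟩)

/-- Infinite Ramsey theorem for pairs. -/
theorem exists_strictMono_pair_color_eq {κ : Type*} [Finite κ] (c : ℕ → ℕ → κ) :
    ∃ g : ℕ → ℕ, StrictMono g ∧ ∃ k, ∀ i j, i < j → c (g i) (g j) = k := by
  have step : ∀ s : {s : Set ℕ // s.Infinite}, ∃ t : {t : Set ℕ // t.Infinite},
      t.1 ⊆ s.1 ∧ ∃ a ∈ s.1, (∀ b ∈ t.1, a < b) ∧ ∃ k, ∀ b ∈ t.1, c a b = k := by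
    rintro ⟨s, hs⟩
    obtain ⟨a, ha⟩ := hs.nonempty
    obtain ⟨k, hk⟩ := (hs.sdiff (Set.finite_Iic a)).exists_infinite_fiber (c a)
    exact ⟨⟨_, hk⟩, fun b hb => hb.1.1, a, ha, fun b hb => not_le.1 hb.1.2, k, fun b hb => hb.2⟩
  choose next hsub a ha hlt k hk using step
  set S : ℕ → {s : Set ℕ // s.Infinite} := fun n => next^[n] ⟨Set.univ, Set.infinite_univ⟩
  have hS : ∀ n, S (n + 1) = next (S n) := fun n => Function.iterate_succ_apply' ..
  have hS_anti : Antitone fun n => (S n).1 :=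
    antitone_nat_of_succ_le fun n => by rw [hS]; exact hsub _
  have ha_mem : ∀ n m, n < m → a (S m) ∈ (next (S n)).1 := fun n m hnm => by
    rw [← hS]; exact hS_anti hnm (ha _)
  have ha_mono : StrictMono fun n => a (S n) :=
    strictMono_nat_of_lt_succ fun n => hlt _ _ (ha_mem n (n + 1) n.lt_succ_self)
  obtain ⟨k₀, hk₀⟩ := Set.infinite_univ.exists_infinite_fiber fun n => k (S n)
  refine ⟨fun i => a (S (Nat.nth (fun n => n ∈ Set.univ ∧ k (S n) = k₀) i)),
    ha_mono.comp (Nat.nth_strictMono hk₀), k₀, fun i j hij => ?_⟩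
  rw [hk _ _ (ha_mem _ _ (Nat.nth_strictMono hk₀ hij))]
  exact (Nat.nth_mem_of_infinite hk₀ i).2

end Ramsey

section Selectors

variable {C : Type*}

def IsPath (sel : List C → Finset C) : List C → List C → Prop
  | _, [] => True
  | ν, c :: p => c ∈ sel ν ∧ IsPath sel (ν ++ [c]) p

theorem isPath_append {sel : List C → Finset C} {ν : List C} (p q : List C) :
    IsPath sel ν (p ++ q) ↔ IsPath sel ν p ∧ IsPath sel (ν ++ p) q := by
  induction p generalizing ν with
  | nil => simp [IsPath]
  | cons c p ih => simp [IsPath, ih, and_assoc]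

theorem isPath_snoc {sel : List C → Finset C} {ν p : List C} {c : C} :
    IsPath sel ν (p ++ [c]) ↔ IsPath sel ν p ∧ c ∈ sel (ν ++ p) := by
  simp [isPath_append, IsPath]

theorem isPath_cons_node_iff {sel : List C → Finset C} {c : C} {ν p : List C} :
    IsPath sel (c :: ν) p ↔ IsPath (fun w => sel (c :: w)) ν p := by
  induction p generalizing ν with
  | nil => exact Iff.rfl
  | cons d p ih => exact and_congr Iff.rfl (ih (ν := ν ++ [d]))

theorem isPath_segmentOf_iff {sel : List C → Finset C} {ν : List C} {x : ℕ → C} {a b : ℕ}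
    (hab : a ≤ b) : IsPath sel ν (segmentOf x a b) ↔
      ∀ n, a ≤ n → n < b → x n ∈ sel (ν ++ segmentOf x a n) := by
  induction b, hab using Nat.le_induction with
  | base => simp only [segmentOf_self]; exact ⟨fun _ n h₁ h₂ => by omega, fun _ => trivial⟩
  | succ b hab ih =>
    rw [segmentOf_snoc x hab, isPath_snoc, ih]
    constructor
    · rintro ⟨h, hb⟩ n h₁ h₂
      rcases Nat.lt_succ_iff_lt_or_eq.1 h₂ with h₂ | rfl
      exacts [h n h₁ h₂, hb]
    · intro h
      exact ⟨fun n h₁ h₂ => h n h₁ (by omega), h b hab b.lt_succ_self⟩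

def IsBranch (sel : List C → Finset C) (y : ℕ → C) : Prop :=
  ∀ n, y n ∈ sel (segmentOf y 0 n)


/-- `α ∈ W(X)`, witnessed by a selector: the strategy tree is the set of its paths from `[]`. -/
def SelWin (X : Set (ℕ → C)) (α : ℕ → ℕ) : Prop :=
  ∃ sel : List C → Finset C, (∀ w, (sel w).card = α w.length + 1) ∧
    ∀ y, IsBranch sel y → y ∈ X

theorem selWin_of_mem_winningShift [Finite C] {X : Set (ℕ → C)} {α : ℕ → ℕ}
    (h : α ∈ winningShift X) : SelWin X α := by
  classical
  obtain ⟨T, hT₀, -, hT_card, hT_X⟩ := h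
  have hT_fin : ∀ w, {c : C | w ++ [c] ∈ T}.Finite := fun _ => Set.toFinite _
  have hT_deep : ∀ d, ∃ w ∈ T, w.length = d := by
    intro d
    induction d with
    | zero => exact ⟨[], hT₀, rfl⟩
    | succ d ih =>
      obtain ⟨w, hw, rfl⟩ := ih
      obtain ⟨c, hc⟩ := Set.nonempty_of_ncard_ne_zero (s := {c : C | w ++ [c] ∈ T})
        (by rw [hT_card w hw]; omega)
      exact ⟨w ++ [c], hc, by simp⟩
  have hjunk : ∀ d, ∃ S : Finset C, S.card = α d + 1 := by
    intro d
    obtain ⟨w, hw, rfl⟩ := hT_deep d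
    refine ⟨(hT_fin w).toFinset, ?_⟩
    rw [← Set.ncard_eq_toFinset_card _ (hT_fin w), hT_card w hw]
  choose junk hjunk using hjunk
  refine ⟨fun w => if w ∈ T then (hT_fin w).toFinset else junk w.length, fun w => ?_,
    fun y hy => hT_X y fun n => ?_⟩
  · dsimp only
    split_ifs with hw
    · rw [← Set.ncard_eq_toFinset_card _ (hT_fin w), hT_card w hw]
    · exact hjunk _
  · rw [ofFn_eq_segmentOf]
    induction n with
    | zero => simpa [segmentOf_self] using hT₀
    | succ n ih =>
      have := hy n
      dsimp only at this
      rw [if_pos ih, Set.Finite.mem_toFinset] at this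
      rwa [segmentOf_snoc y n.zero_le]

theorem mem_winningShift_of_selWin {X : Set (ℕ → C)} {α : ℕ → ℕ} (h : SelWin X α) :
    α ∈ winningShift X := by
  obtain ⟨sel, hcard, hX⟩ := h
  refine ⟨{w | IsPath sel [] w}, trivial, fun u v huv => ((isPath_append u v).1 huv).1,
    fun w hw => ?_, fun y hy => hX y fun n => ?_⟩
  · have : {c : C | w ++ [c] ∈ {w | IsPath sel [] w}} = sel w := by
      ext c
      simp only [Set.mem_ofPred_eq, isPath_snoc, List.nil_append, Finset.mem_coe]
      exact and_iff_right hw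
    rw [this, Set.ncard_coe_finset, hcard]
  · have := hy (n + 1)
    rw [ofFn_eq_segmentOf, segmentOf_snoc y n.zero_le] at this
    exact (isPath_snoc.1 this).2

end Selectors

section Saturation

variable {C M : Type*} [Monoid M]

def Saturates (μ : C → M) (X : Set (ℕ → C)) : Prop :=
  ∀ ⦃x y : ℕ → C⦄ ⦃l l' : ℕ → ℕ⦄, StrictMono l → l 0 = 0 → StrictMono l' → l' 0 = 0 →
    (∀ j, ((segmentOf x (l j) (l (j + 1))).map μ).prod =
      ((segmentOf y (l' j) (l' (j + 1))).map μ).prod) →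
    x ∈ X → y ∈ X

theorem Saturates.iUnion {ι : Type*} {M : ι → Type*} [∀ i, Monoid (M i)] {μ : ∀ i, C → M i}
    {X : ι → Set (ℕ → C)} (h : ∀ i, Saturates (μ i) (X i)) :
    Saturates (fun c i => μ i c) (⋃ i, X i) := by
  intro x y l l' hl hl₀ hl' hl'₀ hval hx
  obtain ⟨i, hx⟩ := Set.mem_iUnion.1 hx
  refine Set.mem_iUnion.2 ⟨i, h i hl hl₀ hl' hl'₀ (fun j => ?_) hx⟩
  have := congrFun (hval j) i
  rwa [Pi.list_prod_apply, Pi.list_prod_apply, List.map_map, List.map_map] at this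

end Saturation

namespace NFA

variable {α σ : Type*} (N : NFA α σ)

def BuchiAccepts (x : ℕ → α) : Prop :=
  ∃ r : ℕ → σ, r 0 ∈ N.start ∧ (∀ n, r (n + 1) ∈ N.step (r n) (x n)) ∧
    ∃ᶠ n in Filter.atTop, r n ∈ N.accept

def flagged : NFA α (σ × Bool) where
  step p a := {q | q.1 ∈ N.step p.1 a ∧ (q.2 = true ↔ p.2 = true ∨ q.1 ∈ N.accept)}
  start := {q | q.1 ∈ N.start ∧ q.2 = false}
  accept := {q | q.2 = true}

/-- Taking the opposite monoid makes the product of a word compose its letters left to right. -/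
def transition (a : α) : (Function.End (Set (σ × Bool)))ᵐᵒᵖ :=
  .op (α := Function.End _) fun S => N.flagged.stepSet S a

theorem prod_map_transition (w : List α) :
    (w.map N.transition).prod = .op (α := Function.End _) fun S => N.flagged.evalFrom S w := by
  induction w with
  | nil => rfl
  | cons a w ih =>
    rw [List.map_cons, List.prod_cons, ih]
    rfl

variable {N}

theorem mem_flagged_evalFrom_snoc {S : Set (σ × Bool)} {w : List α} {a : α} {q : σ} {f : Bool} :
    (q, f) ∈ N.flagged.evalFrom S (w ++ [a]) ↔ ∃ q' f', (q', f') ∈ N.flagged.evalFrom S w ∧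
      q ∈ N.step q' a ∧ (f = true ↔ f' = true ∨ q ∈ N.accept) := by
  simp only [evalFrom_append, evalFrom_singleton, mem_stepSet, Prod.exists]
  rfl

theorem exists_flagged_evalFrom_of_run {x : ℕ → α} {g : ℕ → σ} {a b : ℕ} (hab : a ≤ b)
    (hg : ∀ n, a ≤ n → n < b → g (n + 1) ∈ N.step (g n) (x n)) :
    ∃ f : Bool, (g b, f) ∈ N.flagged.evalFrom {(g a, false)} (segmentOf x a b) ∧
      (f = true ↔ ∃ n, a < n ∧ n ≤ b ∧ g n ∈ N.accept) := by
  classical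
  induction b, hab using Nat.le_induction with
  | base => exact ⟨false, by simp [segmentOf_self], by simp; omega⟩
  | succ b hab ih =>
    obtain ⟨f, hf, hf_iff⟩ := ih fun n h₁ h₂ => hg n h₁ (by omega)
    refine ⟨f || decide (g (b + 1) ∈ N.accept), ?_, ?_⟩
    · rw [segmentOf_snoc x hab, mem_flagged_evalFrom_snoc]
      exact ⟨_, _, hf, hg b hab b.lt_succ_self, by simp⟩
    · simp only [Bool.or_eq_true, decide_eq_true_eq, hf_iff]
      constructor
      · rintro (⟨n, h₁, h₂, hn⟩ | hn)
        exacts [⟨n, h₁, by omega, hn⟩, ⟨b + 1, by omega, le_rfl, hn⟩]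
      · rintro ⟨n, h₁, h₂, hn⟩
        rcases h₂.lt_or_eq with h₂ | rfl
        exacts [Or.inl ⟨n, h₁, by omega, hn⟩, Or.inr hn]

theorem exists_run_of_mem_flagged_evalFrom {x : ℕ → α} {a b : ℕ} (hab : a ≤ b) {p q : σ}
    {f : Bool} (h : (q, f) ∈ N.flagged.evalFrom {(p, false)} (segmentOf x a b)) :
    ∃ g : ℕ → σ, g a = p ∧ g b = q ∧ (∀ n, a ≤ n → n < b → g (n + 1) ∈ N.step (g n) (x n)) ∧
      (f = true → ∃ n, a < n ∧ n ≤ b ∧ g n ∈ N.accept) := by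
  induction b, hab using Nat.le_induction generalizing q f with
  | base =>
    obtain ⟨rfl, rfl⟩ := Prod.mk.inj (by simpa [segmentOf_self] using h)
    exact ⟨fun _ => q, rfl, rfl, fun n h₁ h₂ => by omega, by simp⟩
  | succ b hab ih =>
    rw [segmentOf_snoc x hab, mem_flagged_evalFrom_snoc] at h
    obtain ⟨q', f', h', hstep, hf⟩ := h
    obtain ⟨g, hga, hgb, hg, hgf⟩ := ih h'
    refine ⟨fun n => if n ≤ b then g n else q, by simp [hab, hga], by simp, fun n h₁ h₂ => ?_,
      fun hf' => ?_⟩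
    · rcases (Nat.lt_succ_iff.1 h₂).lt_or_eq with h₂ | rfl
      · simpa [h₂.le, Nat.succ_le_of_lt h₂] using hg n h₁ h₂
      · simpa [hgb] using hstep
    · rcases hf.1 hf' with hf' | hq
      · obtain ⟨n, h₁, h₂, hn⟩ := hgf hf'
        exact ⟨n, h₁, by omega, by simpa [h₂] using hn⟩
      · exact ⟨b + 1, by omega, le_rfl, by simpa using hq⟩

theorem exists_run_of_prod_map_transition_eq {x y : ℕ → α} {r : ℕ → σ} {a b a' b' : ℕ}
    (hab : a ≤ b) (hab' : a' ≤ b') (hr : ∀ n, a ≤ n → n < b → r (n + 1) ∈ N.step (r n) (x n))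
    (hval : ((segmentOf x a b).map N.transition).prod =
      ((segmentOf y a' b').map N.transition).prod) :
    ∃ g : ℕ → σ, g a' = r a ∧ g b' = r b ∧
      (∀ n, a' ≤ n → n < b' → g (n + 1) ∈ N.step (g n) (y n)) ∧
      ((∃ n, a < n ∧ n ≤ b ∧ r n ∈ N.accept) → ∃ n, a' < n ∧ n ≤ b' ∧ g n ∈ N.accept) := by
  obtain ⟨f, hf, hf_iff⟩ := exists_flagged_evalFrom_of_run hab hr
  rw [prod_map_transition, prod_map_transition] at hval
  rw [congrFun (MulOpposite.op_injective hval)] at hf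
  obtain ⟨g, hg₀, hg₁, hg, hg_acc⟩ := exists_run_of_mem_flagged_evalFrom hab' hf
  exact ⟨g, hg₀, hg₁, hg, fun h => hg_acc (hf_iff.2 h)⟩

variable (N) in
theorem saturates_buchiAccepts : Saturates N.transition {x | N.BuchiAccepts x} := by
  intro x y l l' hl hl₀ hl' hl'₀ hval ⟨r, hr₀, hrun, hacc⟩
  choose g hg₀ hg₁ hg hg_acc using fun j => exists_run_of_prod_map_transition_eq
    (hl.monotone j.le_succ) (hl'.monotone j.le_succ) (fun n _ _ => hrun n) (hval j)
  have hglue {j n : ℕ} : l' j ≤ n → n ≤ l' (j + 1) → g (blockIdx l' n) n = g j n :=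
    blockIdx_glue hl' fun j => by rw [hg₀, hg₁]
  refine ⟨fun n => g (blockIdx l' n) n, ?_, fun n => ?_, ?_⟩
  · have h₀ := hg₀ 0
    rw [hl₀, hl'₀] at h₀
    simpa only [hglue (j := 0) hl'₀.le (Nat.zero_le _), h₀] using hr₀
  · obtain ⟨h₁, h₂⟩ := blockIdx_spec hl' (hl'₀ ▸ n.zero_le)
    dsimp only
    rw [hglue h₁ h₂.le, hglue (h₁.trans n.le_succ) h₂]
    exact hg _ n h₁ h₂
  · rw [Filter.frequently_atTop] at hacc ⊢
    intro n₀
    obtain ⟨n, hn, hrn⟩ := hacc (l (n₀ + 1) + 1)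
    obtain ⟨h₁, h₂⟩ := blockIdx_spec hl (hl₀ ▸ (n - 1).zero_le)
    obtain ⟨m, hm₁, hm₂, hgm⟩ := hg_acc (blockIdx l (n - 1)) ⟨n, by omega, by omega, hrn⟩
    have : n₀ + 1 < blockIdx l (n - 1) + 1 := hl.lt_iff_lt.1 (by omega)
    refine ⟨m, ?_, show g (blockIdx l' m) m ∈ _ by rwa [hglue hm₁.le hm₂]⟩
    have := hl'.le_apply (x := blockIdx l (n - 1))
    omega

end NFA

namespace DFA

variable {α Qu Qv : Type*} (U : DFA α Qu) (V : DFA α Qv)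

/-- A Büchi automaton for `U · V^ω`: the state `.inl s` reads a word of `U`, `.inr (some s)` a
word of `V`, and `.inr none` marks a cut between two factors (it then behaves as
`.inr (some V.start)`). -/
def omegaIterNFA : NFA α (Qu ⊕ Option Qv) where
  step
    | .inl s, a => {q | q = .inl (U.step s a) ∨ q = .inr none ∧ U.step s a ∈ U.accept}
    | .inr s, a => {q | q = .inr (some (V.step (s.getD V.start) a)) ∨
        q = .inr none ∧ V.step (s.getD V.start) a ∈ V.accept}
  start := {q | q = .inl U.start ∨ q = .inr none ∧ U.start ∈ U.accept}
  accept := {.inr none}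

noncomputable def omegaIterRun (x : ℕ → α) (k : ℕ → ℕ) (n : ℕ) : Qu ⊕ Option Qv :=
  if n < k 0 then .inl (U.eval (segmentOf x 0 n))
  else .inr (if n = k (blockIdx k n) then none
    else some (V.evalFrom V.start (segmentOf x (k (blockIdx k n)) n)))

variable {U V} {x : ℕ → α} {k : ℕ → ℕ}

theorem omegaIterRun_of_lt {n : ℕ} (hn : n < k 0) :
    U.omegaIterRun V x k n = .inl (U.eval (segmentOf x 0 n)) :=
  if_pos hn

theorem omegaIterRun_of_le_of_lt (hk : StrictMono k) {j n : ℕ} (h₁ : k j ≤ n) (h₂ : n < k (j + 1)) :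
    U.omegaIterRun V x k n =
      .inr (if n = k j then none else some (V.evalFrom V.start (segmentOf x (k j) n))) := by
  rw [omegaIterRun, if_neg (not_lt.2 ((hk.monotone j.zero_le).trans h₁)), blockIdx_eq hk h₁ h₂]

theorem omegaIterRun_cut (hk : StrictMono k) (j : ℕ) : U.omegaIterRun V x k (k j) = .inr none := by
  simp [omegaIterRun_of_le_of_lt hk le_rfl (hk j.lt_succ_self)]

theorem omegaIterRun_succ_mem_step (hk : StrictMono k)
    (hU : segmentOf x 0 (k 0) ∈ U.accepts) (hV : ∀ j, segmentOf x (k j) (k (j + 1)) ∈ V.accepts)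
    (n : ℕ) :
    U.omegaIterRun V x k (n + 1) ∈ (U.omegaIterNFA V).step (U.omegaIterRun V x k n) (x n) := by
  rcases lt_trichotomy (n + 1) (k 0) with h | h | h
  · rw [omegaIterRun_of_lt h, omegaIterRun_of_lt (by omega)]
    left
    rw [eval, segmentOf_snoc x n.zero_le, evalFrom_append_singleton]
  · rw [h, omegaIterRun_cut hk, omegaIterRun_of_lt (by omega)]
    rw [← h, segmentOf_snoc x n.zero_le] at hU
    have := (mem_accepts U).1 hU
    rw [eval, evalFrom_append_singleton] at this
    exact Or.inr ⟨rfl, this⟩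
  · obtain ⟨h₁, h₂⟩ := blockIdx_spec hk (n := n) (by omega)
    set j := blockIdx k n
    have hstate : (if n = k j then none else some (V.evalFrom V.start (segmentOf x (k j) n))).getD
        V.start = V.evalFrom V.start (segmentOf x (k j) n) := by
      split_ifs with h <;> simp [h, segmentOf_self]
    rw [omegaIterRun_of_le_of_lt hk h₁ h₂]
    simp only [omegaIterNFA, Set.mem_ofPred_eq, hstate]
    rw [← evalFrom_append_singleton, ← segmentOf_snoc x h₁]
    rcases (show n + 1 ≤ k (j + 1) from h₂).lt_or_eq with h₃ | h₃
    · left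
      rw [omegaIterRun_of_le_of_lt hk (by omega) h₃, if_neg (by omega)]
    · rw [h₃, omegaIterRun_cut hk]
      exact Or.inr ⟨rfl, hV j⟩

theorem buchiAccepts_omegaIterNFA (hx : x ∈ omegaIter (U.accepts : Set (List α)) V.accepts) :
    (U.omegaIterNFA V).BuchiAccepts x := by
  obtain ⟨k, hk, hU, hV⟩ := hx
  refine ⟨U.omegaIterRun V x k, ?_, omegaIterRun_succ_mem_step hk hU hV, ?_⟩
  · rcases (k 0).eq_zero_or_pos with h | h
    · rw [← h, omegaIterRun_cut hk]
      rw [h, segmentOf_self] at hU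
      exact Or.inr ⟨rfl, hU⟩
    · rw [omegaIterRun_of_lt h, segmentOf_self]
      exact Or.inl rfl
  · rw [Nat.frequently_atTop_iff_infinite]
    refine Set.infinite_of_not_bddAbove fun ⟨B, hB⟩ => ?_
    have := hB (omegaIterRun_cut (U := U) (V := V) (x := x) hk (B + 1))
    have := hk.le_apply (x := B + 1)
    omega

section Runs

variable {r : ℕ → Qu ⊕ Option Qv} (hrun : ∀ n, r (n + 1) ∈ (U.omegaIterNFA V).step (r n) (x n))
include hrun

theorem omegaIterNFA_run_eq_inl (h₀ : r 0 = .inl U.start) {n : ℕ} (hn : ∀ i ≤ n, r i ≠ .inr none) :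
    r n = .inl (U.eval (segmentOf x 0 n)) := by
  induction n with
  | zero => rwa [segmentOf_self]
  | succ n ih =>
    have := hrun n
    rw [ih fun i hi => hn i (by omega)] at this
    rcases this with h | ⟨h, -⟩
    · rw [h, eval, segmentOf_snoc x n.zero_le, evalFrom_append_singleton]
    · exact absurd h (hn _ le_rfl)

theorem omegaIterNFA_run_eq_inr {a : ℕ} (ha : r a = .inr none) {n : ℕ} (han : a ≤ n)
    (hn : ∀ i, a < i → i ≤ n → r i ≠ .inr none) :
    ∃ o, r n = .inr o ∧ o.getD V.start = V.evalFrom V.start (segmentOf x a n) := by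
  induction n, han using Nat.le_induction with
  | base => exact ⟨none, ha, by simp [segmentOf_self]⟩
  | succ n han ih =>
    obtain ⟨o, ho, ho_eval⟩ := ih fun i h₁ h₂ => hn i h₁ (by omega)
    have := hrun n
    rw [ho] at this
    rcases this with h | ⟨h, -⟩
    · exact ⟨_, h, by rw [Option.getD_some, ho_eval, segmentOf_snoc x han,
        evalFrom_append_singleton]⟩
    · exact absurd h (hn _ (by omega) le_rfl)

theorem mem_accepts_left_of_omegaIterNFA_run (h₀ : r 0 = .inl U.start) {b : ℕ}
    (hb : r b = .inr none) (hn : ∀ i < b, r i ≠ .inr none) : segmentOf x 0 b ∈ U.accepts := by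
  have hb₀ : 0 < b := Nat.pos_of_ne_zero fun h => by simp [h, h₀] at hb
  have := hrun (b - 1)
  rw [omegaIterNFA_run_eq_inl hrun h₀ fun i hi => hn i (by omega), Nat.sub_add_cancel hb₀, hb] at this
  rcases this with h | ⟨-, h⟩
  · exact absurd h (by simp)
  · rwa [eval, ← evalFrom_append_singleton, ← segmentOf_snoc x (Nat.zero_le _),
      Nat.sub_add_cancel hb₀] at h

theorem mem_accepts_right_of_omegaIterNFA_run {a b : ℕ} (hab : a < b) (ha : r a = .inr none)
    (hb : r b = .inr none) (hn : ∀ i, a < i → i < b → r i ≠ .inr none) :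
    segmentOf x a b ∈ V.accepts := by
  obtain ⟨o, ho, ho_eval⟩ :=
    omegaIterNFA_run_eq_inr hrun ha (n := b - 1) (by omega) fun i h₁ h₂ => hn i h₁ (by omega)
  have := hrun (b - 1)
  rw [ho, Nat.sub_add_cancel (by omega : 1 ≤ b), hb] at this
  rcases this with h | ⟨-, h⟩
  · exact absurd h (by simp)
  · rwa [ho_eval, ← evalFrom_append_singleton, ← segmentOf_snoc x (by omega),
      Nat.sub_add_cancel (by omega : 1 ≤ b)] at h

end Runs

theorem mem_omegaIter_of_buchiAccepts (hx : (U.omegaIterNFA V).BuchiAccepts x) :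
    x ∈ omegaIter (U.accepts : Set (List α)) V.accepts := by
  obtain ⟨r, hr₀, hrun, hacc⟩ := hx
  set cut : ℕ → Prop := fun n => r n = .inr none
  have hcut : (Set.ofPred cut).Infinite := Nat.frequently_atTop_iff_infinite.1 hacc
  have hcut₀ : ∀ i, cut i → Nat.nth cut 0 ≤ i := fun i hi => by
    rw [Nat.nth_zero]
    exact Nat.sInf_le hi
  refine ⟨Nat.nth cut, Nat.nth_strictMono hcut, ?_, fun j =>
    mem_accepts_right_of_omegaIterNFA_run hrun (Nat.nth_strictMono hcut j.lt_succ_self)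
      (Nat.nth_mem_of_infinite hcut j) (Nat.nth_mem_of_infinite hcut (j + 1))
      fun i h₁ h₂ hi => absurd (Nat.le_nth_of_lt_nth_succ h₂ hi) (not_le.2 h₁)⟩
  rcases hr₀ with h₀ | ⟨h₀, hU⟩
  · exact mem_accepts_left_of_omegaIterNFA_run hrun h₀ (Nat.nth_mem_of_infinite hcut 0)
      fun i hi hci => absurd (hcut₀ i hci) (not_le.2 hi)
  · rw [Nat.le_zero.1 (hcut₀ 0 h₀), segmentOf_self]
    exact hU

theorem setOf_buchiAccepts_omegaIterNFA :
    {x | (U.omegaIterNFA V).BuchiAccepts x} = omegaIter (U.accepts : Set (List α)) V.accepts :=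
  Set.ext fun _ => ⟨mem_omegaIter_of_buchiAccepts, buchiAccepts_omegaIterNFA⟩

end DFA

theorem IsOmegaRegular.exists_saturates {C : Type} {X : Set (ℕ → C)} (hX : IsOmegaRegular X) :
    ∃ (M : Type) (_ : Monoid M) (_ : Finite M) (μ : C → M), Saturates μ X := by
  obtain ⟨n, U, V, hreg, rfl⟩ := hX
  choose Qu _ DU hDU using fun i => (hreg i).1
  choose Qv _ DV hDV using fun i => (hreg i).2
  have hUV : ∀ i, {x | ((DU i).omegaIterNFA (DV i)).BuchiAccepts x} = omegaIter (U i) (V i) := by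
    intro i
    rw [DFA.setOf_buchiAccepts_omegaIterNFA]
    congr <;> ext w
    exacts [hDU i w, hDV i w]
  have (i : Fin n) : Finite (Function.End (Set ((Qu i ⊕ Option (Qv i)) × Bool)))ᵐᵒᵖ :=
    have : Finite (Function.End (Set ((Qu i ⊕ Option (Qv i)) × Bool))) :=
      inferInstanceAs (Finite (Set _ → Set _))
    .of_injective _ MulOpposite.unop_injective
  exact ⟨_, inferInstance, inferInstance, _,
    Saturates.iUnion fun i => hUV i ▸ ((DU i).omegaIterNFA (DV i)).saturates_buchiAccepts⟩

theorem isRegularLang_setOf_prod_map_eq {α N : Type} [Monoid N] [Finite N] (f : α → N) (t : N) :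
    IsRegularLang {w : List α | (w.map f).prod = t} := by
  refine ⟨N, Fintype.ofFinite N, ⟨fun s a => s * f a, 1, {t}⟩, fun w => ?_⟩
  change List.foldl _ _ _ = t ↔ _
  rw [Set.mem_ofPred_eq, List.prod_eq_foldl, List.foldl_map]

theorem isOmegaRegular_iUnion {C ι : Type*} [Finite ι] {U V : ι → Set (List C)}
    (h : ∀ i, IsRegularLang (U i) ∧ IsRegularLang (V i)) :
    IsOmegaRegular (⋃ i, omegaIter (U i) (V i)) := by
  obtain ⟨n, ⟨e⟩⟩ := Finite.exists_equiv_fin ι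
  exact ⟨n, U ∘ e.symm, V ∘ e.symm, fun i => h _,
    (e.symm.surjective.iUnion_comp fun i => omegaIter (U i) (V i)).symm⟩

structure Profile (M : Type*) where
  targets : Set (Set M)

namespace Profile

variable {M : Type*} [Monoid M]

instance : SetLike (Profile M) (Set M) where
  coe := targets
  coe_injective 𝒜 ℬ h := by cases 𝒜; cases ℬ; congr

/-- Playing `𝒜` then `ℬ`: force the first value `a` among those from which `ℬ` forces
`a * z ∈ A`. -/
instance : Mul (Profile M) := ⟨fun 𝒜 ℬ => ⟨{A | {a | {z | a * z ∈ A} ∈ ℬ} ∈ 𝒜}⟩⟩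

instance : One (Profile M) := ⟨⟨{A | 1 ∈ A}⟩⟩

theorem mem_mul {𝒜 ℬ : Profile M} {A : Set M} : A ∈ 𝒜 * ℬ ↔ {a | {z | a * z ∈ A} ∈ ℬ} ∈ 𝒜 :=
  Iff.rfl

theorem mem_one {A : Set M} : A ∈ (1 : Profile M) ↔ (1 : M) ∈ A := Iff.rfl

instance : Monoid (Profile M) where
  mul_assoc _ _ _ := SetLike.ext fun _ => by simp only [mem_mul, Set.mem_ofPred_eq, mul_assoc]
  one_mul _ := SetLike.ext fun _ => by simp only [mem_mul, mem_one, Set.mem_ofPred_eq, one_mul]; rfl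
  mul_one _ := SetLike.ext fun _ => by simp only [mem_mul, mem_one, Set.mem_ofPred_eq, mul_one]; rfl

instance [Finite M] : Finite (Profile M) :=
  .of_injective _ (SetLike.coe_injective (A := Profile M))

variable {C : Type*} (μ : C → M)

def letter (a : ℕ) : Profile M := ⟨{A | ∃ S : Finset C, S.card = a + 1 ∧ ∀ c ∈ S, μ c ∈ A}⟩

def ofList (b : List ℕ) : Profile M := (b.map (letter μ)).prod

variable {μ}

theorem mem_ofList_nil {A : Set M} : A ∈ ofList μ [] ↔ (1 : M) ∈ A := Iff.rfl

theorem mem_ofList_cons {a : ℕ} {b : List ℕ} {A : Set M} :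
    A ∈ ofList μ (a :: b) ↔
      ∃ S : Finset C, S.card = a + 1 ∧ ∀ c ∈ S, {z | μ c * z ∈ A} ∈ ofList μ b := by
  rw [ofList, List.map_cons, List.prod_cons, mem_mul]
  rfl

theorem ofList_append (b b' : List ℕ) : ofList μ (b ++ b') = ofList μ b * ofList μ b' := by
  rw [ofList, List.map_append, List.prod_append, ofList, ofList]

theorem mem_ofList_of_subset {b : List ℕ} {A A' : Set M} (hA : A ∈ ofList μ b) (h : A ⊆ A') :
    A' ∈ ofList μ b := by
  induction b generalizing A A' with
  | nil => exact h hA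
  | cons a b ih =>
    obtain ⟨S, hS, hA⟩ := mem_ofList_cons.1 hA
    exact mem_ofList_cons.2 ⟨S, hS, fun c hc => ih (hA c hc) fun z hz => h hz⟩

end Profile

section Plays

variable {C M : Type*} [Monoid M] (μ : C → M)

def pathValues (sel : List C → Finset C) (ν : List C) (d : ℕ) : Set M :=
  {v | ∃ p : List C, p.length = d ∧ IsPath sel ν p ∧ (p.map μ).prod = v}

variable {μ}

theorem pathValues_mem_ofList {sel : List C → Finset C} {α : ℕ → ℕ}
    (hsel : ∀ w, (sel w).card = α w.length + 1) (ν : List C) (d : ℕ) :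
    pathValues μ sel ν d ∈ Profile.ofList μ (segmentOf α ν.length (ν.length + d)) := by
  induction d generalizing ν with
  | zero =>
    rw [Nat.add_zero, segmentOf_self]
    exact Profile.mem_ofList_nil.2 ⟨[], rfl, trivial, rfl⟩
  | succ d ih =>
    rw [segmentOf_cons α (by omega), Profile.mem_ofList_cons]
    refine ⟨sel ν, hsel ν, fun c hc =>
      Profile.mem_ofList_of_subset (A := pathValues μ sel (ν ++ [c]) d) ?_ ?_⟩
    · simpa [Nat.add_right_comm, Nat.add_assoc] using ih (ν ++ [c])
    · rintro _ ⟨p, rfl, hp, rfl⟩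
      exact ⟨c :: p, rfl, ⟨hc, hp⟩, rfl⟩

theorem exists_selector_of_mem_ofList [Fintype C] {α : ℕ → ℕ} (hα : ∀ n, α n < Fintype.card C)
    {s d : ℕ} {A : Set M} (hA : A ∈ Profile.ofList μ (segmentOf α s (s + d))) :
    ∃ sel : List C → Finset C, (∀ w, (sel w).card = α (s + w.length) + 1) ∧
      ∀ p, p.length = d → IsPath sel [] p → (p.map μ).prod ∈ A := by
  classical
  choose pick hpick using fun n => (Finset.exists_subset_card_eq (s := (Finset.univ : Finset C))
    (n := α n + 1) (by rw [Finset.card_univ]; exact hα n)).imp fun _ h => h.2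
  induction d generalizing s A with
  | zero =>
    rw [Nat.add_zero, segmentOf_self] at hA
    refine ⟨fun w => pick (s + w.length), fun w => hpick _, fun p hp _ => ?_⟩
    rwa [List.length_eq_zero_iff.1 hp]
  | succ d ih =>
    rw [segmentOf_cons α (by omega), Profile.mem_ofList_cons,
      show s + (d + 1) = s + 1 + d by omega] at hA
    obtain ⟨S, hS, hA⟩ := hA
    choose F hF_card hF_mem using fun c : S => ih (hA c c.2)
    refine ⟨fun w => match w with
      | [] => S
      | c :: w => if hc : c ∈ S then F ⟨c, hc⟩ w else pick (s + (w.length + 1)),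
      fun w => ?_, fun p hp hpath => ?_⟩
    · match w with
      | [] => exact hS
      | c :: w =>
        dsimp only
        split_ifs with hc
        · rw [hF_card, List.length_cons, Nat.add_assoc, Nat.add_comm 1]
        · exact hpick _
    · match p, hp, hpath with
      | c :: p, hp, ⟨hc, hpath⟩ =>
        rw [List.nil_append, isPath_cons_node_iff] at hpath
        simp only [dif_pos hc] at hpath
        exact hF_mem ⟨c, hc⟩ p (by simpa using hp) hpath

end Plays

section Transfer

variable {C M : Type*}

/-- The play of the winning selector shadowing the new play: after block `j` it is extended by
a path chosen by `Q` with the value `v j` of that block. -/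
def shadowPrefix (l : ℕ → ℕ) (Q : List C → ℕ → M → List C) (v : ℕ → M) : ℕ → List C
  | 0 => []
  | j + 1 => shadowPrefix l Q v j ++ Q (shadowPrefix l Q v j) (l (j + 1) - l j) (v j)

theorem shadowPrefix_congr (l : ℕ → ℕ) {Q : List C → ℕ → M → List C} {v v' : ℕ → M} {j : ℕ}
    (h : ∀ i < j, v i = v' i) : shadowPrefix l Q v j = shadowPrefix l Q v' j := by
  induction j with
  | zero => rfl
  | succ j ih =>
    rw [shadowPrefix, shadowPrefix, ih fun i hi => h i (by omega), h j j.lt_succ_self]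

variable [Monoid M] (μ : C → M) (l l' : ℕ → ℕ)

def blockValues (w : List C) (i : ℕ) : M :=
  (((w.drop (l' i)).take (l' (i + 1) - l' i)).map μ).prod

/-- Inside block `j` of the new play, follow the selector `F j ν` for the current shadow `ν`. -/
noncomputable def transferSelector (F : ℕ → List C → List C → Finset C)
    (Q : List C → ℕ → M → List C) (w : List C) : Finset C :=
  F (blockIdx l' w.length) (shadowPrefix l Q (blockValues μ l' w) (blockIdx l' w.length))
    (w.drop (l' (blockIdx l' w.length)))

variable {μ l l'}

theorem transferSelector_segmentOf (hl' : StrictMono l') {F : ℕ → List C → List C → Finset C}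
    {Q : List C → ℕ → M → List C} (y : ℕ → C) {j n : ℕ} (h₁ : l' j ≤ n) (h₂ : n < l' (j + 1)) :
    transferSelector μ l l' F Q (segmentOf y 0 n) =
      F j (shadowPrefix l Q (fun i => ((segmentOf y (l' i) (l' (i + 1))).map μ).prod) j)
        (segmentOf y (l' j) n) := by
  rw [transferSelector, segmentOf_length, Nat.sub_zero, blockIdx_eq hl' h₁ h₂,
    segmentOf_drop y _ (by omega), Nat.zero_add]
  congr 1
  refine shadowPrefix_congr l fun i hi => ?_
  have h₃ : l' (i + 1) ≤ n := (hl'.monotone hi).trans h₁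
  have h₄ : l' i ≤ l' (i + 1) := hl'.monotone (Nat.le_add_right i 1)
  rw [blockValues, segmentOf_drop y _ (by omega), Nat.zero_add,
    segmentOf_take y _ (by omega), Nat.add_sub_cancel' h₄]

theorem mem_of_isBranch_transferSelector {X : Set (ℕ → C)} (hX : Saturates μ X)
    (hl : StrictMono l) (hl₀ : l 0 = 0) (hl' : StrictMono l') (hl'₀ : l' 0 = 0)
    {sel : List C → Finset C} (hselX : ∀ y, IsBranch sel y → y ∈ X)
    {F : ℕ → List C → List C → Finset C}
    (hF : ∀ j ν, ν.length = l j → ∀ p, p.length = l' (j + 1) - l' j → IsPath (F j ν) [] p →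
      (p.map μ).prod ∈ pathValues μ sel ν (l (j + 1) - l j))
    {Q : List C → ℕ → M → List C}
    (hQ : ∀ ν d v, v ∈ pathValues μ sel ν d →
      (Q ν d v).length = d ∧ IsPath sel ν (Q ν d v) ∧ ((Q ν d v).map μ).prod = v)
    {y : ℕ → C} (hy : IsBranch (transferSelector μ l l' F Q) y) : y ∈ X := by
  set v : ℕ → M := fun i => ((segmentOf y (l' i) (l' (i + 1))).map μ).prod
  set A := shadowPrefix l Q v
  have hblock : ∀ j, IsPath (F j (A j)) [] (segmentOf y (l' j) (l' (j + 1))) := fun j =>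
    (isPath_segmentOf_iff (hl'.monotone j.le_succ)).2 fun n h₁ h₂ => by
      rw [List.nil_append,
        ← transferSelector_segmentOf (μ := μ) (l := l) (F := F) (Q := Q) hl' y h₁ h₂]
      exact hy n
  have hA : ∀ j, (A j).length = l j ∧ IsPath sel [] (A j) := by
    intro j
    induction j with
    | zero => exact ⟨hl₀.symm, trivial⟩
    | succ j ih =>
      obtain ⟨hq₁, hq₂, -⟩ := hQ _ _ _ (hF j (A j) ih.1 _ (segmentOf_length ..) (hblock j))
      refine ⟨?_, (isPath_append _ _).2 ⟨ih.2, hq₂⟩⟩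
      rw [show A (j + 1) = A j ++ _ from rfl, List.length_append, hq₁, ih.1,
        Nat.add_sub_cancel' (hl.monotone j.le_succ)]
  have hval : ∀ j, ((Q (A j) (l (j + 1) - l j) (v j)).map μ).prod = v j := fun j =>
    (hQ _ _ _ (hF j (A j) (hA j).1 _ (segmentOf_length ..) (hblock j))).2.2
  obtain ⟨z, hz⟩ := exists_segmentOf_eq_of_isPrefix hl (fun j => (hA j).1)
    fun j => List.prefix_append _ _
  have hz_block : ∀ j, segmentOf z (l j) (l (j + 1)) = Q (A j) (l (j + 1) - l j) (v j) := by
    intro j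
    have := hz (j + 1)
    rw [segmentOf_append z (Nat.zero_le _) (hl.monotone j.le_succ), hz j] at this
    exact List.append_cancel_left this
  have hzX : z ∈ X := hselX z fun n => by
    have := (isPath_segmentOf_iff (Nat.zero_le _)).1 (hz (n + 1) ▸ (hA (n + 1)).2) n
      n.zero_le hl.le_apply
    rwa [List.nil_append] at this
  exact hX hl hl₀ hl' hl'₀ (fun j => by rw [hz_block, hval]) hzX

end Transfer

section Surgery

variable {C M : Type*} [Monoid M] {μ : C → M}

theorem exists_selector_forcing_pathValues [Fintype C] {sel : List C → Finset C} {α α' : ℕ → ℕ}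
    (hsel : ∀ w, (sel w).card = α w.length + 1) (hα' : ∀ n, α' n < Fintype.card C)
    {s t s' t' : ℕ} (hst : s ≤ t) (hst' : s' ≤ t')
    (hprof : Profile.ofList μ (segmentOf α s t) = Profile.ofList μ (segmentOf α' s' t'))
    (ν : List C) :
    ∃ F : List C → Finset C, (∀ w, (F w).card = α' (s' + w.length) + 1) ∧
      (ν.length = s → ∀ p, p.length = t' - s' → IsPath F [] p →
        (p.map μ).prod ∈ pathValues μ sel ν (t - s)) := by
  rw [← Nat.add_sub_cancel' hst, ← Nat.add_sub_cancel' hst'] at hprof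
  by_cases hν : ν.length = s
  · obtain ⟨F, hF_card, hF_mem⟩ :=
      exists_selector_of_mem_ofList hα' (hprof ▸ hν ▸ pathValues_mem_ofList hsel ν (t - s))
    exact ⟨F, hF_card, fun _ => hF_mem⟩
  · obtain ⟨F, hF_card, -⟩ := exists_selector_of_mem_ofList (μ := μ) (A := Set.univ) (d := 0)
      (s := s') hα' (by rw [Nat.add_zero, segmentOf_self]; exact Profile.mem_ofList_nil.2 trivial)
    exact ⟨F, hF_card, fun h => absurd h hν⟩

theorem SelWin.of_forall_ofList_eq [Fintype C] {X : Set (ℕ → C)} (hX : Saturates μ X)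
    {α α' : ℕ → ℕ} (hα' : ∀ n, α' n < Fintype.card C) {l l' : ℕ → ℕ}
    (hl : StrictMono l) (hl₀ : l 0 = 0) (hl' : StrictMono l') (hl'₀ : l' 0 = 0)
    (hprof : ∀ j, Profile.ofList μ (segmentOf α (l j) (l (j + 1))) =
      Profile.ofList μ (segmentOf α' (l' j) (l' (j + 1))))
    (hwin : SelWin X α) : SelWin X α' := by
  obtain ⟨sel, hsel, hselX⟩ := hwin
  choose F hF_card hF_mem using fun j => exists_selector_forcing_pathValues hsel hα'
    (hl.monotone (Nat.le_add_right j 1)) (hl'.monotone (Nat.le_add_right j 1)) (hprof j)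
  have hQ : ∀ ν d (v : M), ∃ q : List C, v ∈ pathValues μ sel ν d →
      q.length = d ∧ IsPath sel ν q ∧ (q.map μ).prod = v := fun ν d v =>
    (em (v ∈ pathValues μ sel ν d)).elim (fun ⟨q, hq⟩ => ⟨q, fun _ => hq⟩)
      fun h => ⟨[], fun h' => absurd h' h⟩
  choose Q hQ using hQ
  refine ⟨transferSelector μ l l' F Q, fun w => ?_,
    fun y hy => mem_of_isBranch_transferSelector hX hl hl₀ hl' hl'₀ hselX hF_mem hQ hy⟩
  obtain ⟨h₁, -⟩ := blockIdx_spec hl' (hl'₀ ▸ w.length.zero_le)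
  rw [transferSelector, hF_card, List.length_drop, Nat.add_sub_cancel' h₁]

end Surgery

theorem exists_mem_omegaIter_fiber {B K : Type*} [Finite K] (φ : List B → K) (β : ℕ → B) :
    ∃ t f, β ∈ omegaIter {w | φ w = t} {w | φ w = f} := by
  obtain ⟨g, hg, f, hf⟩ := exists_strictMono_pair_color_eq fun a b => φ (segmentOf β a b)
  exact ⟨_, f, g, hg, rfl, fun j => hf j (j + 1) j.lt_succ_self⟩

section WinningShift

variable {C M : Type*} [Fintype C] [Monoid M] {μ : C → M} {X : Set (ℕ → C)} {m : ℕ}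

theorem mem_winningShift_of_mem_omegaIter (hX : Saturates μ X) (hm : Fintype.card C = m)
    {t f : Profile M} {β β' : ℕ → Fin m}
    (hβ : β ∈ omegaIter {w | Profile.ofList μ (w.map Fin.val) = t}
      {w | Profile.ofList μ (w.map Fin.val) = f})
    (hβ' : β' ∈ omegaIter {w | Profile.ofList μ (w.map Fin.val) = t}
      {w | Profile.ofList μ (w.map Fin.val) = f})
    (hwin : (fun n => (β n : ℕ)) ∈ winningShift X) : (fun n => (β' n : ℕ)) ∈ winningShift X := by
  obtain ⟨k, hk, hk₀, hk_block⟩ := hβ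
  obtain ⟨k', hk', hk'₀, hk'_block⟩ := hβ'
  simp only [Set.mem_ofPred_eq] at hk₀ hk_block hk'₀ hk'_block
  -- merge the first two factors, so that the cuts start at `0`
  have hcut : ∀ {k : ℕ → ℕ}, StrictMono k → StrictMono fun j => if j = 0 then 0 else k j :=
    fun hk => strictMono_nat_of_lt_succ fun j => by
      rcases j with _ | j
      · simpa using (Nat.zero_le _).trans_lt (hk Nat.zero_lt_one)
      · simpa using hk (Nat.lt_succ_self (j + 1))
  have hprof : ∀ (β : ℕ → Fin m) a b, Profile.ofList μ (segmentOf (fun n => (β n : ℕ)) a b) =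
      Profile.ofList μ ((segmentOf β a b).map Fin.val) := fun β a b => by
    rw [← segmentOf_comp]; rfl
  refine mem_winningShift_of_selWin (SelWin.of_forall_ofList_eq hX (fun n => hm ▸ (β' n).2)
    (hcut hk) rfl (hcut hk') rfl (fun j => ?_) (selWin_of_mem_winningShift hwin))
  rcases j with _ | j
  · simp only [↓reduceIte, Nat.zero_add, one_ne_zero, hprof]
    rw [segmentOf_append β (Nat.zero_le _) (hk Nat.zero_lt_one).le,
      segmentOf_append β' (Nat.zero_le _) (hk' Nat.zero_lt_one).le, List.map_append,
      List.map_append, Profile.ofList_append, Profile.ofList_append, hk₀, hk'₀, hk_block 0,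
      hk'_block 0]
  · simp only [Nat.add_one_ne_zero, ↓reduceIte, hprof]
    rw [hk_block, hk'_block]

end WinningShift

/-- If `X ⊆ C^ℕ` is ω-regular (`|C| = m`), then the winning shift `W(X)`,
viewed as a subset of `{0, …, m-1}^ℕ`, is ω-regular. -/
theorem stmt13 {C : Type} [Fintype C] (m : ℕ) (hm : Fintype.card C = m)
    (X : Set (ℕ → C)) (hX : IsOmegaRegular X) :
    IsOmegaRegular { β : ℕ → Fin m | (fun n => (β n : ℕ)) ∈ winningShift X } := by
  obtain ⟨M, _, _, μ, hμ⟩ := hX.exists_saturates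
  set W := { β : ℕ → Fin m | (fun n => (β n : ℕ)) ∈ winningShift X }
  set L : Profile M → Set (List (Fin m)) := fun t => {w | Profile.ofList μ (w.map Fin.val) = t}
  have hW : W = ⋃ p : {p : Profile M × Profile M // (omegaIter (L p.1) (L p.2) ∩ W).Nonempty},
      omegaIter (L p.1.1) (L p.1.2) := by
    ext β
    refine ⟨fun hβ => ?_, fun hβ => ?_⟩
    · obtain ⟨t, f, h⟩ := exists_mem_omegaIter_fiber (fun w => Profile.ofList μ (w.map Fin.val)) β
      exact Set.mem_iUnion.2 ⟨⟨(t, f), β, h, hβ⟩, h⟩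
    · obtain ⟨⟨_, β₀, hβ₀, hβ₀W⟩, h⟩ := Set.mem_iUnion.1 hβ
      exact mem_winningShift_of_mem_omegaIter hμ hm hβ₀ h hβ₀W
  have hL : ∀ t, IsRegularLang (L t) := fun t => by
    simpa only [L, Profile.ofList, List.map_map] using
      isRegularLang_setOf_prod_map_eq (Profile.letter μ ∘ Fin.val) t
  rw [hW]
  exact isOmegaRegular_iUnion fun p => ⟨hL _, hL _⟩
end

section
/- Let A ⊆ ℕ be a finite alphabet with 0 ∈ A and let X ⊆ A^ℕ be a sofic subshift whose unique periodic point is 0^ω (a periodic point is y ∈ X with σᵖ(y) = y for some p ≥ 1). Then X is countable and has finite coding dimension, i.e., there exists d ∈ ℕ with Σx ≤ d for all x ∈ X. -/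
open scoped BigOperators

/-!
Label each `x ∈ X` by a path `p` in the finite graph presenting `X`. If `p` visits the same
vertex at times `a < b`, then repeating `x[a, b)` forever is again the label of a path, hence a
periodic point of `X`, hence `0^ω`; so `x` vanishes on `[a, b)`. Thus `p` is injective on the
support of `x`, which therefore has at most `|V|` elements, and each of its letters is at most
`max A`.
-/

open Function

lemma shiftMap_iterate_apply {C : Type*} (k : ℕ) (y : ℕ → C) (n : ℕ) :
    (shiftMap^[k] y) n = y (n + k) := by
  induction k generalizing y with
  | zero => rfl
  | succ k ih => rw [iterate_succ_apply, ih]; rfl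

lemma shiftMap_iterate_periodic {C : Type*} (f : ℕ → C) (L : ℕ) :
    shiftMap^[L] (fun n => f (n % L)) = fun n => f (n % L) := by
  funext n
  rw [shiftMap_iterate_apply, Nat.add_mod_right]

section LabeledPaths

variable {V C : Type*} {E : Set (V × C × V)} {p : ℕ → V} {x : ℕ → C}

lemma isPath_cycle (hp : ∀ n, (p n, x n, p (n + 1)) ∈ E) {a L : ℕ} (hL : 0 < L)
    (hcyc : p (a + L) = p a) (n : ℕ) :
    (p (a + n % L), x (a + n % L), p (a + (n + 1) % L)) ∈ E := by
  have hlt : n % L < L := Nat.mod_lt n hL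
  have hnext : p (a + (n + 1) % L) = p (a + n % L + 1) := by
    rw [← Nat.mod_add_mod]
    rcases (show n % L + 1 ≤ L by omega).lt_or_eq with hsucc | hsucc
    · rw [Nat.mod_eq_of_lt hsucc, add_assoc]
    · rw [hsucc, Nat.mod_self, add_zero, add_assoc, hsucc, hcyc]
  rw [hnext]
  exact hp _

end LabeledPaths

section SoficCycles

variable {V C : Type*} [Zero C] {E : Set (V × C × V)} {X : Set (ℕ → C)} {p : ℕ → V}
  {x : ℕ → C}

lemma apply_eq_zero_of_cycle
    (hpaths : ∀ (q : ℕ → V) (y : ℕ → C), (∀ n, (q n, y n, q (n + 1)) ∈ E) → y ∈ X)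
    (hperiodic : ∀ y ∈ X, ∀ L, 1 ≤ L → shiftMap^[L] y = y → y = fun _ => 0)
    (hp : ∀ n, (p n, x n, p (n + 1)) ∈ E) {a L : ℕ} (hL : 0 < L) (hcyc : p (a + L) = p a) :
    x a = 0 := by
  have hmem := hpaths _ _ (isPath_cycle hp hL hcyc)
  have hzero := hperiodic _ hmem L hL (shiftMap_iterate_periodic (fun i => x (a + i)) L)
  simpa using congrFun hzero 0

lemma injOn_support_of_path
    (hpaths : ∀ (q : ℕ → V) (y : ℕ → C), (∀ n, (q n, y n, q (n + 1)) ∈ E) → y ∈ X)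
    (hperiodic : ∀ y ∈ X, ∀ L, 1 ≤ L → shiftMap^[L] y = y → y = fun _ => 0)
    (hp : ∀ n, (p n, x n, p (n + 1)) ∈ E) : Set.InjOn p (support x) := by
  intro m hm n hn hpmn
  by_contra hne
  rcases Nat.lt_or_gt_of_ne hne with hlt | hlt
  · exact hm (apply_eq_zero_of_cycle hpaths hperiodic hp (Nat.sub_pos_of_lt hlt)
      (by rw [Nat.add_sub_cancel' hlt.le, hpmn]))
  · exact hn (apply_eq_zero_of_cycle hpaths hperiodic hp (Nat.sub_pos_of_lt hlt)
      (by rw [Nat.add_sub_cancel' hlt.le, hpmn]))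

end SoficCycles

lemma countable_setOf_support_finite {ι M : Type*} [Countable ι] [Countable M] [Zero M] :
    {y : ι → M | (support y).Finite}.Countable :=
  (Set.countable_range ((⇑) : (ι →₀ M) → ι → M)).mono fun y hy =>
    Set.mem_range.mpr ⟨Finsupp.ofSupportFinite y hy, rfl⟩

open Finset in
lemma sum_le_mul_of_ncard_support_le {ι : Type*} {y : ι → ℕ} {k b : ℕ}
    (hfin : (support y).Finite) (hk : (support y).ncard ≤ k) (hb : ∀ i, y i ≤ b)
    (F : Finset ι) : ∑ i ∈ F, y i ≤ k * b := by
  classical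
  have hcard : #{i ∈ F | y i ≠ 0} ≤ k := by
    rw [← Set.ncard_coe_finset]
    refine (Set.ncard_le_ncard (fun i hi => ?_) hfin).trans hk
    exact (mem_filter.mp hi).2
  calc ∑ i ∈ F, y i = ∑ i ∈ F with y i ≠ 0, y i := (sum_filter_ne_zero F).symm
    _ ≤ #{i ∈ F | y i ≠ 0} * b := by
      simpa using sum_le_card_nsmul _ y b fun i _ => hb i
    _ ≤ k * b := Nat.mul_le_mul_right b hcard

theorem stmt14_general (A : Finset ℕ) (X : Set (ℕ → ℕ))
    (hA : ∀ x ∈ X, ∀ n : ℕ, x n ∈ A)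
    (hsofic : IsSofic X)
    (huniq : ∀ y : ℕ → ℕ,
      (y ∈ X ∧ ∃ p : ℕ, 1 ≤ p ∧ shiftMap^[p] y = y) ↔ y = fun _ => 0) :
    X.Countable ∧ FiniteCodingDim X := by
  obtain ⟨V, _, E, hX⟩ := hsofic
  have hperiodic : ∀ y ∈ X, ∀ L, 1 ≤ L → shiftMap^[L] y = y → y = fun _ => 0 :=
    fun y hy L hL hper => (huniq y).mp ⟨hy, L, hL, hper⟩
  have hinj : ∀ x ∈ X, ∃ p : ℕ → V, Set.InjOn p (support x) := by
    intro x hx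
    obtain ⟨p, hp⟩ := hX ▸ hx
    exact ⟨p, injOn_support_of_path (fun q y hq => hX ▸ ⟨q, hq⟩) hperiodic hp⟩
  have hfin : ∀ x ∈ X, (support x).Finite := fun x hx =>
    have ⟨_, hp⟩ := hinj x hx
    Set.Finite.of_finite_image (Set.toFinite _) hp
  refine ⟨countable_setOf_support_finite.mono hfin, Nat.card V * A.sup id, fun x hx => ?_⟩
  obtain ⟨p, hp⟩ := hinj x hx
  refine sum_le_mul_of_ncard_support_le (hfin x hx) ?_
    fun n => Finset.le_sup (f := id) (hA x hx n)
  exact hp.ncard_image ▸ Set.ncard_le_card _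

/-- A sofic subshift over a finite alphabet `A ⊆ ℕ` containing `0` whose
unique periodic point is `0^ω` is countable and has finite coding dimension. -/
theorem stmt14 (A : Finset ℕ) (h0 : (0 : ℕ) ∈ A) (X : Set (ℕ → ℕ))
    (hsub : IsSubshift X) (hA : ∀ x ∈ X, ∀ n : ℕ, x n ∈ A)
    (hsofic : IsSofic X)
    (huniq : ∀ y : ℕ → ℕ,
      (y ∈ X ∧ ∃ p : ℕ, 1 ≤ p ∧ shiftMap^[p] y = y) ↔ y = fun _ => 0) :
    X.Countable ∧ FiniteCodingDim X :=
  stmt14_general A X hA hsofic huniq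
end

section
/- Let C be a finite alphabet and X ⊆ C^ℕ a sofic subshift. Then the winning shift W(X) ⊆ ℕ^ℕ is weakly 1-codable. If moreover X is countable, then W(X) is 1-codable. -/
open scoped BigOperators

/-!
Present `X` as the set of label sequences of infinite paths in a finite graph with vertex
set `V`. For `y` of finite support, `y ∈ W(X)` is decided by a finite game (`Wins`) in which a
position is the follower set of the word played so far; for a sofic shift this follower set is
the set of label sequences of paths leaving the set of vertices reached so far, so the game
from any position is a predicate on `Set V`, a finite set of possibilities.

Reading `ν(y)` in unary, the padded columns reveal the multiplicities `y[m]` from the largest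
index `m` downwards, and the predicate "the rest of the game is won" can be updated column by
column: this is a finite automaton, so `W(X)` is weakly `1`-codable.

If `Σ y` is large for some `y ∈ W(X)`, then `y` has more nonzero letters than there are
predicates on `Set V`, so two nonzero positions `p < q` start the same remaining game.
Repeating `y[p..q)` forever gives an element of `W(X)` with infinitely many nonzero letters,
and its strategy tree branches infinitely often along every path; its branches form an
uncountable subset of `X`.
-/

section InfiniteWords

variable {C : Type*}

def IsClosedInProduct (X : Set (ℕ → C)) : Prop :=
  ∀ y : ℕ → C, (∀ n : ℕ, ∃ x ∈ X, ∀ i < n, y i = x i) → y ∈ X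

def appendInf (w : List C) (z : ℕ → C) : ℕ → C :=
  fun i => if h : i < w.length then w[i] else z (i - w.length)

lemma appendInf_of_lt {w : List C} {i : ℕ} (z : ℕ → C) (h : i < w.length) :
    appendInf w z i = w[i] := dif_pos h

@[simp] lemma appendInf_nil (z : ℕ → C) : appendInf [] z = z := by
  ext i; simp [appendInf]

lemma appendInf_append (w v : List C) (z : ℕ → C) :
    appendInf (w ++ v) z = appendInf w (appendInf v z) := by
  ext i
  simp only [appendInf, List.length_append]
  split_ifs with h1 h2 h3 h3 <;> first | omega | simp [List.getElem_append, *, Nat.sub_sub]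

lemma ofFn_appendInf (w : List C) (z : ℕ → C) (n : ℕ) :
    List.ofFn (fun i : Fin (w.length + n) => appendInf w z i) =
      w ++ List.ofFn (fun i : Fin n => z i) := by
  apply List.ext_getElem (by simp)
  intro i h1 h2
  simp only [List.getElem_ofFn, List.getElem_append]
  split_ifs with h
  · exact appendInf_of_lt z h
  · simp [appendInf, h]

lemma appendInf_singleton_tail (z : ℕ → C) : appendInf [z 0] (fun n => z (n + 1)) = z := by
  ext i; cases i <;> simp [appendInf]

def followerSet (F : Set (ℕ → C)) (w : List C) : Set (ℕ → C) :=
  { z | appendInf w z ∈ F }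

@[simp] lemma followerSet_nil (F : Set (ℕ → C)) : followerSet F [] = F := by
  simp [followerSet]

lemma followerSet_append (F : Set (ℕ → C)) (w v : List C) :
    followerSet F (w ++ v) = followerSet (followerSet F w) v := by
  simp [followerSet, appendInf_append]

/-- The finite-horizon game behind `winningShift`, played on a set `F` of infinite words: in
round `i` one offers `l[i] + 1` letters, the opponent picks one of them, and `F` is replaced by
its follower set; one wins if `F` is still nonempty after the last round. -/
def Wins : List ℕ → Set (ℕ → C) → Prop
  | [], F => F.Nonempty
  | a :: l, F => ∃ S : Finset C, S.card = a + 1 ∧ ∀ c ∈ S, Wins l (followerSet F [c])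

lemma Wins.nonempty : ∀ {l : List ℕ} {F : Set (ℕ → C)}, Wins l F → F.Nonempty
  | [], _, h => h
  | a :: l, F, ⟨S, hS, hwin⟩ => by
    obtain ⟨c, hc⟩ := Finset.card_pos.mp (by omega : 0 < S.card)
    obtain ⟨z, hz⟩ := (hwin c hc).nonempty
    exact ⟨_, hz⟩

lemma wins_zero_cons {F : Set (ℕ → C)} (h : F.Nonempty) : Wins [0] F := by
  obtain ⟨z, hz⟩ := h
  refine ⟨{z 0}, rfl, fun c hc => ?_⟩
  rw [Finset.mem_singleton.mp hc]
  exact ⟨fun n => z (n + 1), by simpa [followerSet, appendInf_singleton_tail] using hz⟩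

end InfiniteWords

lemma Set.Infinite.not_countable_of_injective {β : Type*} {D : Set ℕ} (hD : D.Infinite)
    {X : Set β} {f : Set D → X} (hf : Function.Injective f) : ¬ X.Countable := by
  intro hX
  have := hX.to_subtype
  obtain ⟨g, hg⟩ := exists_injective_nat X
  exact Function.cantor_injective _ ((hD.natEmbedding D).injective.comp (hg.comp hf))

section StrategyTree

variable {C : Type*}

def extendBy (next : List C → C) (w : List C) : ℕ → List C
  | 0 => w
  | m + 1 => extendBy next w m ++ [next (extendBy next w m)]

lemma extendBy_eq (next : List C → C) (w : List C) (m : ℕ) :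
    extendBy next w m = w ++ List.ofFn (fun i : Fin m => next (extendBy next w i)) := by
  induction m with
  | zero => simp [extendBy]
  | succ m ih =>
    rw [List.ofFn_succ_last, ← List.append_assoc]
    simp only [Fin.val_castSucc, Fin.val_last]
    rw [← ih, extendBy]

lemma length_extendBy (next : List C → C) (w : List C) (m : ℕ) :
    (extendBy next w m).length = w.length + m := by
  induction m with
  | zero => rfl
  | succ m ih => simp [extendBy, ih, Nat.add_assoc]

lemma extendBy_mem {T : Set (List C)} {next : List C → C}
    (hnext : ∀ v ∈ T, v ++ [next v] ∈ T) {w : List C} (hw : w ∈ T) (m : ℕ) :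
    extendBy next w m ∈ T := by
  induction m with
  | zero => exact hw
  | succ m ih => exact hnext _ ih

namespace IsStrategyTree

variable {X : Set (ℕ → C)} {α : ℕ → ℕ} {T : Set (List C)}

lemma exists_append_singleton_mem (hT : IsStrategyTree X α T) {w : List C} (hw : w ∈ T) :
    ∃ c, w ++ [c] ∈ T :=
  Set.nonempty_of_ncard_ne_zero (s := {c | w ++ [c] ∈ T}) (by rw [hT.2.2.1 w hw]; omega)

lemma take_mem (hT : IsStrategyTree X α T) {w : List C} (hw : w ∈ T) (n : ℕ) :
    w.take n ∈ T :=
  hT.2.1 _ (w.drop n) (by rwa [List.take_append_drop])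

lemma appendInf_extendBy_mem (hT : IsStrategyTree X α T) {next : List C → C}
    (hnext : ∀ v ∈ T, v ++ [next v] ∈ T) {w : List C} (hw : w ∈ T) :
    appendInf w (fun m => next (extendBy next w m)) ∈ X := by
  refine hT.2.2.2 _ fun n => ?_
  have hlong : List.ofFn (fun i : Fin (w.length + n) =>
      appendInf w (fun m => next (extendBy next w m)) i) = extendBy next w n := by
    rw [ofFn_appendInf, extendBy_eq]
  have hprefix := hT.take_mem (extendBy_mem hnext hw n) n
  have hpre := congrArg (List.take n) hlong
  rw [← Fin.ofFn_take_eq_take_ofFn (by omega)] at hpre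
  rw [← hpre] at hprefix
  exact hprefix

lemma followerSet_nonempty (hT : IsStrategyTree X α T) {w : List C} (hw : w ∈ T) :
    (followerSet X w).Nonempty := by
  obtain ⟨c, -⟩ := hT.exists_append_singleton_mem hw
  have : Nonempty C := ⟨c⟩
  choose! next hnext using fun v (hv : v ∈ T) => hT.exists_append_singleton_mem hv
  exact ⟨_, hT.appendInf_extendBy_mem hnext hw⟩

lemma succ_le_card [Fintype C] (hT : IsStrategyTree X α T) (i : ℕ) :
    α i + 1 ≤ Fintype.card C := by
  obtain ⟨c, -⟩ := hT.exists_append_singleton_mem hT.1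
  have : Nonempty C := ⟨c⟩
  choose! next hnext using fun v (hv : v ∈ T) => hT.exists_append_singleton_mem hv
  have hnode := extendBy_mem hnext hT.1 i
  have hlen : (extendBy next [] i).length = i := by simp [length_extendBy]
  calc α i + 1 = {c | extendBy next [] i ++ [c] ∈ T}.ncard := by rw [hT.2.2.1 _ hnode, hlen]
    _ ≤ (Set.univ : Set C).ncard := Set.ncard_le_ncard (Set.subset_univ _)
    _ = Fintype.card C := by rw [Set.ncard_univ, Nat.card_eq_fintype_card]

lemma exists_two_children (hT : IsStrategyTree X α T) {w : List C} (hw : w ∈ T) :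
    ∃ a b : C, w ++ [a] ∈ T ∧ w ++ [b] ∈ T ∧ (α w.length ≠ 0 → a ≠ b) := by
  by_cases h : α w.length = 0
  · obtain ⟨c, hc⟩ := hT.exists_append_singleton_mem hw
    exact ⟨c, c, hc, hc, absurd h⟩
  · have hcard : 1 < {c | w ++ [c] ∈ T}.ncard := by rw [hT.2.2.1 w hw]; omega
    obtain ⟨a, ha, b, hb, hab⟩ :=
      (Set.one_lt_ncard (Set.finite_of_ncard_pos (by omega))).mp hcard
    exact ⟨a, b, ha, hb, fun _ => hab⟩

lemma not_countable (hT : IsStrategyTree X α T) (hinf : {j | α j ≠ 0}.Infinite) :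
    ¬ X.Countable := by
  classical
  obtain ⟨c, -⟩ := hT.exists_append_singleton_mem hT.1
  have : Nonempty C := ⟨c⟩
  choose! c₀ c₁ hc₀ hc₁ hne using fun w (hw : w ∈ T) => hT.exists_two_children hw
  let next (S : Set ℕ) (w : List C) : C := if w.length ∈ S then c₁ w else c₀ w
  have hnext (S : Set ℕ) : ∀ v ∈ T, v ++ [next S v] ∈ T := fun v hv => by
    dsimp only [next]; split_ifs; exacts [hc₁ v hv, hc₀ v hv]
  let x (S : Set ℕ) : ℕ → C := fun m => next S (extendBy (next S) [] m)
  have hxX (S : Set ℕ) : x S ∈ X := by simpa using hT.appendInf_extendBy_mem (hnext S) hT.1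
  -- `x S` takes the child `c₁` exactly at the depths in `S`, so it determines `S ∩ {α ≠ 0}`
  have hrecover (S S' : Set ℕ) (h : x S = x S') (m : ℕ) (hm : α m ≠ 0) :
      m ∈ S ↔ m ∈ S' := by
    have hnode : extendBy (next S) [] m = extendBy (next S') [] m := by
      rw [extendBy_eq (next S), extendBy_eq (next S')]
      exact congrArg (fun y => [] ++ List.ofFn fun i : Fin m => y i) h
    have hw := extendBy_mem (hnext S) hT.1 m
    have hlen : (extendBy (next S) [] m).length = m := by simp [length_extendBy]
    have hxm := congrFun h m
    simp only [x, next, ← hnode, hlen] at hxm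
    have hc := hne _ hw (by rwa [hlen])
    split_ifs at hxm <;> tauto
  refine hinf.not_countable_of_injective (f := fun U => ⟨x (Subtype.val '' U), hxX _⟩) ?_
  intro U U' h
  ext ⟨m, hm⟩
  have hmem (V : Set {j | α j ≠ 0}) : m ∈ Subtype.val '' V ↔ ⟨m, hm⟩ ∈ V :=
    Subtype.val_injective.mem_set_image (a := ⟨m, hm⟩)
  rw [← hmem, ← hmem]
  exact hrecover _ _ (congrArg Subtype.val h) m hm

lemma wins (hT : IsStrategyTree X α T) (n : ℕ) :
    Wins (List.ofFn fun i : Fin n => α i) X := by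
  suffices h : ∀ d, ∀ w ∈ T, w.length + d = n →
      Wins (List.ofFn fun i : Fin d => α (w.length + i)) (followerSet X w) by
    simpa using h n [] hT.1 (by simp)
  intro d
  induction d with
  | zero => exact fun w hw _ => hT.followerSet_nonempty hw
  | succ d ih =>
    intro w hw hlen
    have hfin : {c | w ++ [c] ∈ T}.Finite :=
      Set.finite_of_ncard_pos (by rw [hT.2.2.1 w hw]; omega)
    rw [List.ofFn_succ, Wins]
    refine ⟨hfin.toFinset, ?_, fun c hc => ?_⟩
    · rw [← Set.ncard_eq_toFinset_card _ hfin, hT.2.2.1 w hw]; rfl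
    · have hwc : w ++ [c] ∈ T := hfin.mem_toFinset.mp hc
      have := ih _ hwc (by simp; omega)
      simpa [followerSet_append, Nat.add_assoc, Nat.add_comm 1] using this

end IsStrategyTree

end StrategyTree

section Games

variable {C : Type*} {X : Set (ℕ → C)}

def selectionTree (X : Set (ℕ → C)) (sel : ℕ → Set (ℕ → C) → Finset C) :
    Set (List C) :=
  {w | ∀ i (h : i < w.length), w[i] ∈ sel i (followerSet X (w.take i))}

lemma mem_selectionTree_of_append_mem {sel : ℕ → Set (ℕ → C) → Finset C} {u v : List C}
    (h : u ++ v ∈ selectionTree X sel) : u ∈ selectionTree X sel := fun i hi => by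
  have := h i (by simp; omega)
  rwa [List.getElem_append_left hi, List.take_append_of_le_length hi.le] at this

lemma append_singleton_mem_selectionTree {sel : ℕ → Set (ℕ → C) → Finset C} {w : List C}
    {c : C} : w ++ [c] ∈ selectionTree X sel ↔
      w ∈ selectionTree X sel ∧ c ∈ sel w.length (followerSet X w) := by
  refine ⟨fun h => ⟨mem_selectionTree_of_append_mem h, by simpa using h w.length (by simp)⟩,
    ?_⟩
  rintro ⟨hw, hc⟩ i hi
  rcases (Nat.lt_succ_iff.mp (by simpa using hi)).lt_or_eq with hi | rfl
  · simpa [List.getElem_append_left hi, List.take_append_of_le_length hi.le] using hw i hi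
  · simpa using hc

lemma mem_winningShift_of_invariant (hX : IsClosedInProduct X) (β : ℕ → ℕ)
    (I : ℕ → Set (ℕ → C) → Prop) (h0 : I 0 X)
    (hstep : ∀ j F, I j F →
      ∃ S : Finset C, S.card = β j + 1 ∧ ∀ c ∈ S, I (j + 1) (followerSet F [c]))
    (hne : ∀ j F, I j F → F.Nonempty) :
    β ∈ winningShift X := by
  choose sel hsel using fun j F => (Classical.em (I j F)).elim
    (fun h => (hstep j F h).imp fun S hS _ => hS) (fun h => ⟨∅, fun h' => absurd h' h⟩)
  have hinv : ∀ w ∈ selectionTree X sel, I w.length (followerSet X w) := by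
    intro w
    induction w using List.reverseRecOn with
    | nil => exact fun _ => by simpa using h0
    | append_singleton w c ih =>
      intro hwc
      obtain ⟨hw, hc⟩ := append_singleton_mem_selectionTree.mp hwc
      simpa [followerSet_append] using ((hsel _ _) (ih hw)).2 c hc
  refine ⟨selectionTree X sel, fun i hi => absurd hi (Nat.not_lt_zero i),
    fun _ _ => mem_selectionTree_of_append_mem, fun w hw => ?_, fun y hy => ?_⟩
  · have hchildren :
        {c | w ++ [c] ∈ selectionTree X sel} = ↑(sel w.length (followerSet X w)) := by
      ext c; simp [append_singleton_mem_selectionTree, hw]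
    rw [hchildren, Set.ncard_coe_finset, ((hsel _ _) (hinv w hw)).1]
  · refine hX y fun n => ?_
    obtain ⟨z, hz⟩ := hne _ _ (hinv _ (hy n))
    exact ⟨_, hz, fun i hi => by rw [appendInf_of_lt z (by simpa)]; simp⟩

theorem mem_winningShift_iff_wins (hX : IsClosedInProduct X) {y : ℕ → ℕ} {n : ℕ}
    (hy : ∀ j, n ≤ j → y j = 0) :
    y ∈ winningShift X ↔ Wins (List.ofFn fun i : Fin n => y i) X := by
  refine ⟨fun ⟨T, hT⟩ => hT.wins n, fun h => ?_⟩
  set l := List.ofFn fun i : Fin n => y i with hl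
  refine mem_winningShift_of_invariant hX y (fun j => Wins (l.drop j)) h (fun j F hF => ?_)
    (fun j F hF => hF.nonempty)
  rcases lt_or_ge j n with hj | hj
  · rw [List.drop_eq_getElem_cons (by simpa [hl] using hj)] at hF
    simpa [hl, Wins] using hF
  · rw [List.drop_eq_nil_of_le (by simpa [hl] using hj)] at hF
    rw [List.drop_eq_nil_of_le (by simp [hl]; omega), hy j hj]
    exact wins_zero_cons hF

end Games

section SoficGraph

variable {C V : Type*} (E : Set (V × C × V))

def followers (P : Set V) : Set (ℕ → C) :=
  {z | ∃ p : ℕ → V, p 0 ∈ P ∧ ∀ n, (p n, z n, p (n + 1)) ∈ E}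

def successors (P : Set V) (c : C) : Set V :=
  {v' | ∃ v ∈ P, (v, c, v') ∈ E}

lemma followerSet_followers (P : Set V) (c : C) :
    followerSet (followers E P) [c] = followers E (successors E P c) := by
  ext z
  constructor
  · rintro ⟨p, hp0, hp⟩
    refine ⟨fun n => p (n + 1), ⟨p 0, hp0, by simpa [appendInf] using hp 0⟩, fun n => ?_⟩
    simpa [appendInf] using hp (n + 1)
  · rintro ⟨q, ⟨v, hv, he⟩, hq⟩
    refine ⟨fun | 0 => v | n + 1 => q n, hv, fun n => ?_⟩
    cases n with
    | zero => simpa [appendInf] using he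
    | succ n => simpa [appendInf] using hq n

def gameStep (a : ℕ) (W : Set V → Prop) (P : Set V) : Prop :=
  ∃ S : Finset C, S.card = a + 1 ∧ ∀ c ∈ S, W (successors E P c)

lemma wins_cons_followers (a : ℕ) (l : List ℕ) (P : Set V) :
    Wins (a :: l) (followers E P) ↔ gameStep E a (fun Q => Wins l (followers E Q)) P := by
  simp [Wins, gameStep, followerSet_followers]

end SoficGraph

section UnaryColumns

variable {k : ℕ}

def unaryColumns (n : ℕ) (t : Fin k → ℕ) : List (Fin k → Option Unit) :=
  List.ofFn fun j : Fin n => fun i => if n ≤ j + t i then some () else none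

lemma padTuple_unaryANS (t : Fin k → ℕ) :
    padTuple (fun i => unaryANS.rep (t i)) = unaryColumns (Finset.univ.sup t) t := by
  have hsup : (Finset.univ.sup fun i => (unaryANS.rep (t i)).length) = Finset.univ.sup t := by
    simp [unaryANS]
  apply List.ext_getElem (by simp [padTuple, unaryColumns, hsup])
  intro j h1 h2
  have hj : j < Finset.univ.sup t := by simpa [unaryColumns] using h2
  simp only [padTuple, unaryColumns, List.getElem_ofFn]
  funext i
  have hti : t i ≤ Finset.univ.sup t := Finset.le_sup (Finset.mem_univ i)
  rw [hsup]
  simp only [padOne, unaryANS, List.length_replicate, List.map_replicate]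
  rw [List.getD_eq_getElem _ _ (by simp; omega), List.getElem_append]
  split_ifs with h₁ h₂ <;> simp only [List.length_replicate] at h₁ <;> first | omega | simp

lemma unaryColumns_succ (n : ℕ) (t : Fin k → ℕ) :
    unaryColumns (n + 1) t =
      unaryColumns n (fun i => t i - 1) ++ [fun i => if 0 < t i then some () else none] := by
  rw [unaryColumns, List.ofFn_succ_last]
  congr 2
  · funext j i
    simp only [Fin.val_castSucc]
    split_ifs <;> first | rfl | omega
  · funext i
    simp only [Fin.val_last]
    split_ifs <;> first | rfl | omega

lemma unaryColumns_append {n : ℕ} {t : Fin k → ℕ} (hsup : Finset.univ.sup t = n)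
    (B : Set (Fin k)) [DecidablePred (· ∈ B)] (hB : {i | 0 < t i} ⊆ B) (hne : B.Nonempty) :
    Finset.univ.sup (fun i => if i ∈ B then t i + 1 else 0) = n + 1 ∧
      unaryColumns (n + 1) (fun i => if i ∈ B then t i + 1 else 0) =
        unaryColumns n t ++ [fun i => if i ∈ B then some () else none] := by
  have hle (i : Fin k) : t i ≤ n := hsup ▸ Finset.le_sup (Finset.mem_univ i)
  have hzero (i : Fin k) (hi : i ∉ B) : t i = 0 := by
    by_contra h; exact hi (hB (Nat.pos_of_ne_zero h))
  obtain ⟨i₀, hi₀B, hi₀⟩ : ∃ i ∈ B, t i = n := by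
    rcases n.eq_zero_or_pos with rfl | hn
    · obtain ⟨i, hi⟩ := hne
      exact ⟨i, hi, Nat.le_zero.mp (hle i)⟩
    · have : Nonempty (Fin k) := ⟨hne.some⟩
      obtain ⟨i, -, hi⟩ := Finset.exists_mem_eq_sup Finset.univ Finset.univ_nonempty t
      exact ⟨i, hB (by simp only [Set.mem_ofPred_eq]; omega), by omega⟩
  refine ⟨le_antisymm (Finset.sup_le fun i _ => ?_) ?_, ?_⟩
  · split_ifs <;> have := hle i <;> omega
  · exact le_of_eq_of_le (by simp [hi₀B, hi₀]) (Finset.le_sup (Finset.mem_univ i₀))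
  · rw [unaryColumns_succ]
    congr 2
    · funext i
      by_cases hi : i ∈ B <;> simp [hi, hzero]
    · funext i
      by_cases hi : i ∈ B <;> simp [hi]

end UnaryColumns

section UnaryAutomaton

variable {C V : Type*} (E : Set (V × C × V)) {k : ℕ}

noncomputable def occCount (t : Fin k → ℕ) (m : ℕ) : ℕ := {i | t i = m}.ncard

def activeSet (g : Fin k → Option Unit) : Set (Fin k) := {i | (g i).isSome}

open Classical in
/-- Reads `padTuple` of the unary representations of a nondecreasing `t`. These are
right-aligned, so coordinate `i` becomes active `t i` columns before the end, and the
multiplicities `occCount t m` are revealed in the order `m = max t, …, 1`, with `occCount t 0`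
only known at the end. A state records the active coordinates and, as a predicate on the sets
of vertices `P` (standing for `followers E P`), the game `Wins` on the multiplicities read so
far. -/
noncomputable def nuDFA (k : ℕ) :
    DFA (Fin k → Option Unit) (Option (Set (Fin k) × (Set V → Prop))) where
  step s g := s.bind fun As =>
    if As.1 ⊆ activeSet g ∧ IsUpperSet (activeSet g) ∧ (activeSet g).Nonempty then
      some (activeSet g, gameStep E (activeSet g \ As.1).ncard As.2)
    else none
  start := some (∅, fun P => (followers E P).Nonempty)
  accept := {s | ∃ A W, s = some (A, W) ∧ gameStep E (k - A.ncard) W Set.univ}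

lemma activeSet_ite (p : Fin k → Prop) [DecidablePred p] :
    activeSet (fun i => if p i then some () else none) = {i | p i} := by
  ext i; by_cases h : p i <;> simp [activeSet, h]

lemma nuDFA_eval_unaryColumns {n : ℕ} {t : Fin k → ℕ} (ht : Monotone t)
    (hsup : Finset.univ.sup t = n) :
    (nuDFA E k).eval (unaryColumns n t) = some ({i | 0 < t i},
      fun P => Wins (List.ofFn fun r : Fin n => occCount t (r + 1)) (followers E P)) := by
  induction n generalizing t with
  | zero =>
    have ht0 (i : Fin k) : t i = 0 := (Finset.sup_eq_bot_iff t _).mp hsup i (Finset.mem_univ i)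
    simp [unaryColumns, nuDFA, ht0, Wins]
  | succ n ih =>
    have hsup' : Finset.univ.sup (fun i => t i - 1) = n := by
      rw [← Function.comp_def (· - 1) t,
        ← Finset.apply_sup_eq_sup_comp _ (fun x y => by omega) rfl, hsup, Nat.add_sub_cancel]
    obtain ⟨i₀, hi₀⟩ : ∃ i, 0 < t i := by
      by_contra! h
      have := (Finset.sup_eq_bot_iff t Finset.univ).mpr fun i _ => Nat.le_zero.mp (h i)
      rw [hsup] at this
      exact Nat.succ_ne_zero n this
    rw [unaryColumns_succ, DFA.eval_append_singleton,
      ih (fun i j hij => Nat.sub_le_sub_right (ht hij) 1) hsup']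
    simp only [nuDFA, Option.bind_some]
    rw [activeSet_ite (fun i => 0 < t i),
      if_pos ⟨fun i (hi : 0 < t i - 1) => (by omega : 0 < t i),
        fun i j hij hi => lt_of_lt_of_le hi (ht hij), ⟨i₀, hi₀⟩⟩]
    have hnew : ({i | 0 < t i} \ {i | 0 < t i - 1}).ncard = occCount t 1 := by
      unfold occCount; congr 1; ext i; simp only [Set.mem_sdiff, Set.mem_ofPred_eq]; omega
    have hshift (r : ℕ) : occCount (fun i => t i - 1) (r + 1) = occCount t (r + 2) := by
      unfold occCount; congr 1; ext i; simp only [Set.mem_ofPred_eq]; omega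
    congr
    funext P
    rw [List.ofFn_succ, wins_cons_followers, hnew]
    simp [hshift]

lemma exists_unaryColumns_of_nuDFA_eval {w : List (Fin k → Option Unit)}
    {s : Set (Fin k) × (Set V → Prop)} (h : (nuDFA E k).eval w = some s) :
    ∃ t : Fin k → ℕ, Monotone t ∧ Finset.univ.sup t = w.length ∧
      w = unaryColumns w.length t := by
  classical
  induction w using List.reverseRecOn generalizing s with
  | nil => exact ⟨0, monotone_const, by simp, by simp [unaryColumns]⟩
  | append_singleton w g ih =>
    rw [DFA.eval_append_singleton] at h
    cases hw : (nuDFA E k).eval w with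
    | none => rw [hw] at h; simp [nuDFA] at h
    | some As =>
      obtain ⟨t, ht, hsup, hwt⟩ := ih hw
      rw [hwt, nuDFA_eval_unaryColumns E ht hsup] at h
      simp only [nuDFA, Option.bind_some] at h
      split_ifs at h with hvalid
      obtain ⟨hB, hup, hne⟩ := hvalid
      obtain ⟨hsup', hcols⟩ := unaryColumns_append hsup (activeSet g) hB hne
      have hg : (fun i => if i ∈ activeSet g then some () else none) = g := by
        funext i
        cases hgi : g i <;> simp [activeSet, hgi]
      refine ⟨_, fun i j hij => ?_, by simpa using hsup', by simp [hcols, hg, ← hwt]⟩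
      by_cases hi : i ∈ activeSet g
      · simp [hi, hup hij hi, ht hij]
      · simp [hi]

end UnaryAutomaton

section Recognizability

variable {C : Type*} {X : Set (ℕ → C)}

lemma unaryColumns_mem_accepts_iff {V : Type*} {E : Set (V × C × V)}
    (hX : IsClosedInProduct X) (hXE : X = followers E Set.univ) {k : ℕ} {t : Fin k → ℕ}
    (ht : Monotone t) :
    unaryColumns (Finset.univ.sup t) t ∈ (nuDFA E k).accepts ↔
      occCount t ∈ winningShift X := by
  set M := Finset.univ.sup t
  have hle (i : Fin k) : t i ≤ M := Finset.le_sup (Finset.mem_univ i)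
  have hzero : k - {i | 0 < t i}.ncard = occCount t 0 := by
    have := Set.ncard_add_ncard_compl {i : Fin k | 0 < t i}
    have hc : {i : Fin k | 0 < t i}ᶜ = {i | t i = 0} := by ext; simp
    rw [hc, Nat.card_eq_fintype_card, Fintype.card_fin] at this
    unfold occCount; omega
  have hvanish (j : ℕ) (hj : M + 1 ≤ j) : occCount t j = 0 := by
    unfold occCount
    rw [Set.ncard_eq_zero]
    ext i; have := hle i; simp only [Set.mem_ofPred_eq, Set.mem_empty_iff_false, iff_false]; omega
  rw [DFA.mem_accepts, nuDFA_eval_unaryColumns E ht rfl, mem_winningShift_iff_wins hX hvanish,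
    List.ofFn_succ, hXE, wins_cons_followers]
  refine ⟨fun ⟨A, W, hAW, hstep⟩ => ?_, fun h => ⟨_, _, rfl, by simpa [hzero] using h⟩⟩
  obtain ⟨rfl, rfl⟩ := Prod.mk.inj (Option.some_inj.mp hAW)
  simpa [hzero] using hstep

theorem recognizable_nuSet_winningShift {V : Type} [Finite V] {E : Set (V × C × V)}
    (hX : IsClosedInProduct X) (hXE : X = followers E Set.univ) (k : ℕ) :
    unaryANS.Recognizable (nuSet (winningShift X) k) := by
  classical
  refine ⟨_, Fintype.ofFinite _, nuDFA E k, fun w => ⟨fun hw => ?_, ?_⟩⟩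
  · obtain ⟨A, W, hs, -⟩ := id hw
    obtain ⟨t, ht, hsup, hwt⟩ := exists_unaryColumns_of_nuDFA_eval E hs
    rw [hwt, ← hsup] at hw
    exact ⟨t, ⟨ht, (unaryColumns_mem_accepts_iff hX hXE ht).mp hw⟩,
      by rw [padTuple_unaryANS, hsup, ← hwt]⟩
  · rintro ⟨t, ⟨ht, hwin⟩, rfl⟩
    rw [padTuple_unaryANS]
    exact (unaryColumns_mem_accepts_iff hX hXE ht).mpr hwin

end Recognizability

section CodingDimension

/-- The indices `0, …, p - 1, p, …, q - 1, p, …, q - 1, …`. -/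
def loopIndex (p q j : ℕ) : ℕ := if j < p then j else p + (j - p) % (q - p)

lemma loopIndex_lt {p q : ℕ} (hpq : p < q) (j : ℕ) : loopIndex p q j < q := by
  unfold loopIndex
  split_ifs
  · omega
  · have := Nat.mod_lt (j - p) (by omega : 0 < q - p); omega

lemma loopIndex_succ {p q : ℕ} (hpq : p < q) (j : ℕ) :
    loopIndex p q (j + 1) = if loopIndex p q j + 1 = q then p else loopIndex p q j + 1 := by
  unfold loopIndex
  rcases lt_or_ge j p with hj | hj
  · simp only [hj, ↓reduceIte, show j + 1 ≠ q by omega]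
    split_ifs with hj'
    · rfl
    · rw [show j + 1 - p = 0 by omega, Nat.zero_mod]; omega
  · simp only [show ¬ j + 1 < p by omega, show ¬ j < p by omega, ↓reduceIte]
    rw [Nat.sub_add_comm hj]
    have hd : 0 < q - p := by omega
    have hmod : (j - p + 1) % (q - p) =
        if (j - p) % (q - p) + 1 = q - p then 0 else (j - p) % (q - p) + 1 := by
      conv_lhs => rw [← Nat.div_add_mod (j - p) (q - p), Nat.add_assoc, Nat.mul_add_mod]
      split_ifs with h
      · rw [h, Nat.mod_self]
      · exact Nat.mod_eq_of_lt (by have := Nat.mod_lt (j - p) hd; omega)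
    rw [hmod]
    split_ifs <;> omega

lemma loopIndex_add_mul (p q m : ℕ) : loopIndex p q (p + m * (q - p)) = p := by
  simp [loopIndex]

variable {C V : Type*} {X : Set (ℕ → C)} {E : Set (V × C × V)}

lemma loop_mem_winningShift (hX : IsClosedInProduct X) (hXE : X = followers E Set.univ)
    {l : List ℕ} (hl : Wins l X) {p q : ℕ} (hpq : p < q) (hq : q ≤ l.length)
    (hloop : ∀ P, Wins (l.drop q) (followers E P) ↔ Wins (l.drop p) (followers E P)) :
    (fun j => l.getD (loopIndex p q j) 0) ∈ winningShift X := by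
  have h0 : loopIndex p q 0 = 0 := by unfold loopIndex; split_ifs <;> simp; omega
  refine mem_winningShift_of_invariant hX _
    (fun j F => ∃ P, F = followers E P ∧ Wins (l.drop (loopIndex p q j)) F)
    ⟨Set.univ, hXE, by simpa [h0] using hl⟩ (fun j F ⟨P, hFP, hwin⟩ => ?_)
    (fun j F ⟨_, _, hwin⟩ => hwin.nonempty)
  have hr := loopIndex_lt hpq j
  rw [List.drop_eq_getElem_cons (by omega), hFP, wins_cons_followers] at hwin
  obtain ⟨S, hS, hwin⟩ := hwin
  refine ⟨S, by rwa [List.getD_eq_getElem _ _ (by omega)], fun c hc => ⟨_, by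
    rw [hFP, followerSet_followers], ?_⟩⟩
  rw [hFP, followerSet_followers, loopIndex_succ hpq]
  split_ifs with h
  · rw [← hloop, ← h]; exact hwin c hc
  · exact hwin c hc

lemma not_countable_of_wins_loop (hX : IsClosedInProduct X) (hXE : X = followers E Set.univ)
    {l : List ℕ} (hl : Wins l X) {p q : ℕ} (hpq : p < q) (hq : q ≤ l.length)
    (hp : l[p] ≠ 0)
    (hloop : ∀ P, Wins (l.drop q) (followers E P) ↔ Wins (l.drop p) (followers E P)) :
    ¬ X.Countable := by
  obtain ⟨T, hT⟩ := loop_mem_winningShift hX hXE hl hpq hq hloop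
  refine hT.not_countable (Set.infinite_of_injective_forall_mem
    (f := fun m : ℕ => p + m * (q - p)) (fun m m' h => ?_) fun m => ?_)
  · exact Nat.eq_of_mul_eq_mul_right (by omega : 0 < q - p) (by simpa using h)
  · show l.getD (loopIndex p q (p + m * (q - p))) 0 ≠ 0
    rwa [loopIndex_add_mul, List.getD_eq_getElem _ _ (by omega)]

theorem finiteCodingDim_winningShift [Fintype C] [Finite V] (hX : IsClosedInProduct X)
    (hXE : X = followers E Set.univ) (hc : X.Countable) : FiniteCodingDim (winningShift X) := by
  classical
  have := Fintype.ofFinite (Set V → Prop)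
  refine ⟨Fintype.card (Set V → Prop) * Fintype.card C, fun y ⟨T, hT⟩ F => ?_⟩
  by_contra! hbig
  set n := F.sup id + 1
  have hF : F ⊆ Finset.range n := fun i hi =>
    Finset.mem_range.mpr (Nat.lt_succ_of_le (Finset.le_sup (f := id) hi))
  set NZ := (Finset.range n).filter (y · ≠ 0)
  have hNZ : Fintype.card (Set V → Prop) < NZ.card := by
    by_contra! h
    have : ∑ i ∈ F, y i ≤ Fintype.card (Set V → Prop) * Fintype.card C := calc
      ∑ i ∈ F, y i ≤ ∑ i ∈ Finset.range n, y i := Finset.sum_le_sum_of_subset hF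
      _ = ∑ i ∈ NZ, y i := (Finset.sum_filter_ne_zero _).symm
      _ ≤ NZ.card * Fintype.card C :=
        Finset.sum_le_card_nsmul _ _ _ fun i _ => by have := hT.succ_le_card i; omega
      _ ≤ _ := Nat.mul_le_mul_right _ h
    omega
  set l := List.ofFn fun i : Fin n => y i
  obtain ⟨p, hp, q, hq, hpq, hloop⟩ := Finset.exists_ne_map_eq_of_card_lt_of_maps_to
    (t := Finset.univ) (f := fun j (P : Set V) => Wins (l.drop j) (followers E P))
    (by rwa [Finset.card_univ]) (fun _ _ => Finset.mem_univ _)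
  wlog hlt : p < q generalizing p q
  · exact this q hq p hp hpq.symm hloop.symm ((lt_or_gt_of_ne hpq).resolve_left hlt)
  have hqn : q < n := Finset.mem_range.mp (Finset.mem_filter.mp hq).1
  refine not_countable_of_wins_loop hX hXE (hT.wins n) hlt (by simp; omega) ?_
    (fun P => Iff.of_eq (congrFun hloop P).symm) hc
  simp only [List.getElem_ofFn]
  exact (Finset.mem_filter.mp hp).2

end CodingDimension

/-- The winning shift of a sofic subshift is weakly 1-codable; the winning
shift of a countable sofic subshift is 1-codable. -/
theorem stmt17 {C : Type} [Fintype C] (X : Set (ℕ → C)) (hsub : IsSubshift X)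
    (hsofic : IsSofic X) :
    WeaklySCodable unaryANS (winningShift X) ∧
    (X.Countable → SCodable unaryANS (winningShift X)) := by
  obtain ⟨V, _, E, hXE⟩ := hsofic
  have hXE' : X = followers E Set.univ := by simp [hXE, followers]
  have hweak : WeaklySCodable unaryANS (winningShift X) :=
    recognizable_nuSet_winningShift hsub.2 hXE'
  exact ⟨hweak, fun hc => ⟨hweak, finiteCodingDim_winningShift hsub.2 hXE' hc⟩⟩
end
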